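/- arXiv:1810.03608 — 4 statements merged into one kernel-verified Lean document; each statement's English description precedes it below -/
import Mathlib

section
/- Discrete generalized Bihari inequality: Assume RSC and suppose δ is small enough that λ' := λ(1 − κδΛ/2) > 0. Then for all k ≥ 0 the oracle-iteration potential satisfies Ψ_{k+1} − Ψ_k ≤ −δ·λ'·F⁻¹(Ψ_k). -/
open scoped BigOperators

/-- The soft-thresholding (shrinkage) operator `𝒮(·,1)` applied entrywise. -/
noncomputable def soft (x : ℝ) : ℝ := Real.sign x * max (|x| - 1) 0

/-- Partial derivative of the loss `ℓ` at `θ` in coordinate `i`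
(the intercept coordinate is `none`). -/
noncomputable def gradAt {p : ℕ} (ℓ : (Option (Fin p) → ℝ) → ℝ)
    (θ : Option (Fin p) → ℝ) (i : Option (Fin p)) : ℝ :=
  fderiv ℝ ℓ θ (Pi.single i 1)

/-- Second partial derivative (Hessian entry) of `ℓ` at `θ`. -/
noncomputable def pderiv2 {p : ℕ} (ℓ : (Option (Fin p) → ℝ) → ℝ)
    (θ : Option (Fin p) → ℝ) (i j : Option (Fin p)) : ℝ :=
  fderiv ℝ (fun θ' => gradAt ℓ θ' j) θ (Pi.single i 1)

/-- `H̄(θ) = ∫₀¹ ∇²ℓ(θ⋆ + μ(θ − θ⋆)) dμ`, entrywise. -/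
noncomputable def Hbar {p : ℕ} (ℓ : (Option (Fin p) → ℝ) → ℝ)
    (θstar θ : Option (Fin p) → ℝ) (i j : Option (Fin p)) : ℝ :=
  ∫ μ in (0:ℝ)..(1:ℝ), pderiv2 ℓ (fun l => θstar l + μ * (θ l - θstar l)) i j

/-- Point on the segment from `θa` to `θb` at parameter `μ`. -/
def segPt {p : ℕ} (θa θb : Option (Fin p) → ℝ) (μ : ℝ) : Option (Fin p) → ℝ :=
  fun i => θa i + μ * (θb i - θa i)

/-- `θo` is an oracle estimator: it minimizes `ℓ` over `{θ : β_{Sᶜ} = 0}`. -/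
def OracleEst {p : ℕ} (ℓ : (Option (Fin p) → ℝ) → ℝ) (S : Finset (Fin p))
    (θo : Option (Fin p) → ℝ) : Prop :=
  (∀ j, j ∉ S → θo (some j) = 0) ∧
  ∀ θ : Option (Fin p) → ℝ, (∀ j, j ∉ S → θ (some j) = 0) → ℓ θo ≤ ℓ θ

/-- The GLBI iteration with parameters `κ, δ`:
`α_{k+1} = α_k − κδ∇_α ℓ(θ_k)`, `z_{k+1} = z_k − δ∇_β ℓ(θ_k)`, `β_{k+1} = κ𝒮(z_{k+1},1)`,
with `z_0 = β_0 = 0` (the initial intercept is arbitrary). -/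
def GLBIIter {p : ℕ} (ℓ : (Option (Fin p) → ℝ) → ℝ) (κ δ : ℝ)
    (θ : ℕ → Option (Fin p) → ℝ) (z : ℕ → Fin p → ℝ) : Prop :=
  (∀ j, z 0 j = 0) ∧ (∀ j, θ 0 (some j) = 0) ∧
  (∀ k, θ (k+1) none = θ k none - κ * δ * gradAt ℓ (θ k) none) ∧
  (∀ k j, z (k+1) j = z k j - δ * gradAt ℓ (θ k) (some j)) ∧
  (∀ k j, θ (k+1) (some j) = κ * soft (z (k+1) j))

/-- The oracle iteration: same recursion as GLBI but restricted to coordinates in `S`,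
with `z'_{k,Sᶜ} = β'_{k,Sᶜ} = 0`. -/
def OracleIter {p : ℕ} (ℓ : (Option (Fin p) → ℝ) → ℝ) (S : Finset (Fin p)) (κ δ : ℝ)
    (θ' : ℕ → Option (Fin p) → ℝ) (z' : ℕ → Fin p → ℝ) : Prop :=
  (∀ j, z' 0 j = 0) ∧ (∀ j, θ' 0 (some j) = 0) ∧
  (∀ k j, j ∉ S → z' k j = 0) ∧ (∀ k j, j ∉ S → θ' k (some j) = 0) ∧
  (∀ k, θ' (k+1) none = θ' k none - κ * δ * gradAt ℓ (θ' k) none) ∧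
  (∀ k, ∀ j ∈ S, z' (k+1) j = z' k j - δ * gradAt ℓ (θ' k) (some j)) ∧
  (∀ k, ∀ j ∈ S, θ' (k+1) (some j) = κ * soft (z' (k+1) j))

/-- Restricted strong convexity: `λ I ⪯ ∇²_{S_α,S_α} ℓ(θ) ⪯ Λ I` for every `θ` on the
segment between `θ'_k` and `θᵒ` (any `k ≥ 0`) or between `θ⋆` and `θᵒ`, stated via
quadratic forms on vectors supported on `S_α` (the intercept together with `S`). -/
def RSCcond {p : ℕ} (ℓ : (Option (Fin p) → ℝ) → ℝ) (S : Finset (Fin p))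
    (θstar θo : Option (Fin p) → ℝ) (θ' : ℕ → Option (Fin p) → ℝ) (lam Lam : ℝ) : Prop :=
  ∀ θ : Option (Fin p) → ℝ,
    ((∃ k : ℕ, ∃ μ ∈ Set.Icc (0:ℝ) 1, θ = segPt (θ' k) θo μ) ∨
      (∃ μ ∈ Set.Icc (0:ℝ) 1, θ = segPt θstar θo μ)) →
    ∀ v : Option (Fin p) → ℝ, (∀ j, j ∉ S → v (some j) = 0) →
      lam * ∑ i, v i ^ 2 ≤ ∑ i, ∑ i', v i * pderiv2 ℓ θ i i' * v i' ∧
      ∑ i, ∑ i', v i * pderiv2 ℓ θ i i' * v i' ≤ Lam * ∑ i, v i ^ 2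

/-- `irr̄ = H̄_{Sᶜ,S_α}(θ) · H̄_{S_α,S_α}(θ)⁻¹`. -/
noncomputable def irrMat {p : ℕ} (ℓ : (Option (Fin p) → ℝ) → ℝ)
    (θstar : Option (Fin p) → ℝ) (S : Finset (Fin p)) (θk : Option (Fin p) → ℝ) :
    Matrix {j : Fin p // j ∉ S} (Option {j : Fin p // j ∈ S}) ℝ :=
  (Matrix.of fun (jc : {j : Fin p // j ∉ S}) (a : Option {j : Fin p // j ∈ S}) =>
      Hbar ℓ θstar θk (some jc.1) (Option.map Subtype.val a)) *
    (Matrix.of fun (a b : Option {j : Fin p // j ∈ S}) =>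
      Hbar ℓ θstar θk (Option.map Subtype.val a) (Option.map Subtype.val b))⁻¹

/-- The increment vector `((α'_{k+1}/κ, z'_{k+1,S}) − (α'_k/κ, z'_{k,S}))` on `S_α`. -/
noncomputable def oracleDiff {p : ℕ} (κ : ℝ) (θ' : ℕ → Option (Fin p) → ℝ)
    (z' : ℕ → Fin p → ℝ) (S : Finset (Fin p)) (k : ℕ) :
    Option {j : Fin p // j ∈ S} → ℝ :=
  fun a =>
    match a with
    | none => θ' (k+1) none / κ - θ' k none / κ
    | some j => z' (k+1) j.1 - z' k j.1

/-- Irrepresentable condition: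
`sup_{K ≥ 1} ‖Σ_{k<K} irr̄_k ((α'_{k+1}/κ, z'_{k+1,S}) − (α'_k/κ, z'_{k,S}))‖_∞ < 1 − η/2`
and `sup_k ‖irr̄_k‖_∞ ≤ C` (maximum absolute row sums). -/
def IRRcond {p : ℕ} (ℓ : (Option (Fin p) → ℝ) → ℝ) (θstar : Option (Fin p) → ℝ)
    (S : Finset (Fin p)) (κ : ℝ) (θ' : ℕ → Option (Fin p) → ℝ) (z' : ℕ → Fin p → ℝ)
    (η C : ℝ) : Prop :=
  (∃ b, b < 1 - η / 2 ∧ ∀ K : ℕ, 1 ≤ K → ∀ jc : {j : Fin p // j ∉ S},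
      |∑ k ∈ Finset.range K,
        ((irrMat ℓ θstar S (θ' k)).mulVec (oracleDiff κ θ' z' S k)) jc| ≤ b) ∧
  (∀ k : ℕ, ∀ jc : {j : Fin p // j ∉ S},
      ∑ a : Option {j : Fin p // j ∈ S}, |irrMat ℓ θstar S (θ' k) jc a| ≤ C)

/-- `‖∇ℓ(θ)‖_∞`. -/
noncomputable def gradInfNorm {p : ℕ} (ℓ : (Option (Fin p) → ℝ) → ℝ)
    (θ : Option (Fin p) → ℝ) : ℝ :=
  ⨆ i : Option (Fin p), |gradAt ℓ θ i|

/-- `d_k = ‖(α'_k, β'_{k,S}) − (αᵒ, βᵒ_S)‖₂`. -/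
noncomputable def dOrc {p : ℕ} (S : Finset (Fin p)) (θo : Option (Fin p) → ℝ)
    (θ' : ℕ → Option (Fin p) → ℝ) (k : ℕ) : ℝ :=
  Real.sqrt ((θ' k none - θo none) ^ 2 + ∑ j ∈ S, (θ' k (some j) - θo (some j)) ^ 2)

/-- `β^o_min = min{|βᵒ_j| : βᵒ_j ≠ 0}`. -/
noncomputable def bomin {p : ℕ} (θo : Option (Fin p) → ℝ) : ℝ :=
  sInf {r : ℝ | ∃ j : Fin p, θo (some j) ≠ 0 ∧ r = |θo (some j)|}

/-- The function `F` of the (discrete) generalized Bihari inequality. -/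
noncomputable def Fpot (κ bo : ℝ) (s : ℕ) (x : ℝ) : ℝ :=
  x / (2 * κ) +
    (if x < bo ^ 2 then 0 else if x < s * bo ^ 2 then 2 * x / bo else 2 * Real.sqrt (s * x))

/-- `F⁻¹(x) = inf{y ≥ 0 : F(y) ≥ x}`. -/
noncomputable def FpotInv (κ bo : ℝ) (s : ℕ) (x : ℝ) : ℝ :=
  sInf {y : ℝ | 0 ≤ y ∧ x ≤ Fpot κ bo s y}

/-- The potential `Ψ_k = ‖βᵒ_S‖₁ − ⟨βᵒ_S, ρ'_{k,S}⟩ + d_k²/(2κ)` of the oracle iteration,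
where `ρ'_{k} = z'_k − 𝒮(z'_k,1)`. -/
noncomputable def PsiD {p : ℕ} (S : Finset (Fin p)) (θo : Option (Fin p) → ℝ) (κ : ℝ)
    (θ' : ℕ → Option (Fin p) → ℝ) (z' : ℕ → Fin p → ℝ) (k : ℕ) : ℝ :=
  (∑ j ∈ S, |θo (some j)|) - (∑ j ∈ S, θo (some j) * (z' k j - soft (z' k j))) +
    (dOrc S θo θ' k) ^ 2 / (2 * κ)

/-! Write `E = θ'_k - θᵒ` and `G = ∇_{S_α} ℓ(θ'_k)`. Since `z - 𝒮(z,1)` is a subgradient of `|·|`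
at `𝒮(z,1)`, one step changes the potential by at most `-δ⟪E, G⟫ + κδ²‖G‖²/2`. The oracle
estimator is stationary on `S_α`, so `G = H̄ E` with `H̄` the Hessian averaged over the segment
`[θ'_k, θᵒ]`; RSC then gives `⟪E, G⟫ ≥ λ‖E‖²` and the co-coercivity bound `‖G‖² ≤ Λ⟪E, G⟫`, hence
`Ψ_{k+1} - Ψ_k ≤ -δλ'‖E‖²`. Finally `Ψ_k ≤ F(‖E‖²)` by Cauchy–Schwarz over the coordinates that
contribute to the `ℓ₁` part of `Ψ_k`, so `F⁻¹(Ψ_k) ≤ ‖E‖²`. -/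

open Finset Matrix

theorem soft_eq_ite (x : ℝ) :
    soft x = if 1 < x then x - 1 else if x < -1 then x + 1 else 0 := by
  rcases lt_trichotomy x 0 with h | rfl | h
  · rw [soft, Real.sign_of_neg h, abs_of_neg h]
    split_ifs
    · linarith
    · rw [max_eq_left (by linarith)]; ring
    · rw [max_eq_right (by linarith)]; ring
  · norm_num [soft]
  · rw [soft, Real.sign_of_pos h, abs_of_pos h]
    split_ifs
    · rw [max_eq_left (by linarith)]; ring
    · linarith
    · rw [max_eq_right (by linarith)]; ring

theorem soft_zero : soft 0 = 0 := by simp [soft]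

theorem abs_sub_soft_le_one (x : ℝ) : |x - soft x| ≤ 1 := by
  rw [soft_eq_ite]
  split_ifs <;> rw [abs_le] <;> constructor <;> linarith

theorem sub_soft_of_soft_pos {x : ℝ} (h : 0 < soft x) : x - soft x = 1 := by
  rw [soft_eq_ite] at *; split_ifs at h ⊢ <;> linarith

theorem sub_soft_of_soft_neg {x : ℝ} (h : soft x < 0) : x - soft x = -1 := by
  rw [soft_eq_ite] at *; split_ifs at h ⊢ <;> linarith

/-- `x - soft x` is a subgradient of `|·|` at `soft x`. -/
theorem sub_soft_sub_mul_soft_nonneg (a b : ℝ) : 0 ≤ (a - soft a - (b - soft b)) * soft a := by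
  have hb := abs_le.mp (abs_sub_soft_le_one b)
  rcases lt_trichotomy (soft a) 0 with h | h | h
  · rw [sub_soft_of_soft_neg h]; nlinarith
  · simp [h]
  · rw [sub_soft_of_soft_pos h]; nlinarith

theorem soft_mul_nonpos_of_abs_sub_ne {b z : ℝ} (h : |b| - b * (z - soft z) ≠ 0) :
    soft z * b ≤ 0 := by
  by_contra! hpos
  rcases mul_pos_iff.mp hpos with ⟨hs, hb⟩ | ⟨hs, hb⟩
  · exact h (by rw [sub_soft_of_soft_pos hs, abs_of_pos hb]; ring)
  · exact h (by rw [sub_soft_of_soft_neg hs, abs_of_neg hb]; ring)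

theorem abs_sub_mul_sub_soft_le (b z : ℝ) : |b| - b * (z - soft z) ≤ 2 * |b| := by
  have : -(b * (z - soft z)) ≤ |b| := by
    calc -(b * (z - soft z)) ≤ |b| * |z - soft z| := by rw [← abs_mul]; exact neg_le_abs _
      _ ≤ |b| := mul_le_of_le_one_right (abs_nonneg b) (abs_sub_soft_le_one z)
  linarith

theorem soft_step_le (κ δ b g z : ℝ) (hκ : 0 < κ) :
    b * (z - soft z) - b * (z - δ * g - soft (z - δ * g))
      + ((κ * soft (z - δ * g) - b) ^ 2 - (κ * soft z - b) ^ 2) / (2 * κ)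
      ≤ -δ * g * (κ * soft z - b) + κ * δ ^ 2 / 2 * g ^ 2 := by
  have hmono := sub_soft_sub_mul_soft_nonneg (z - δ * g) z
  set a := soft z
  set c := soft (z - δ * g)
  have hc : c ^ 2 ≤ (a - δ * g) ^ 2 := by nlinarith [sq_nonneg (a - δ * g - c)]
  have : ((κ * c - b) ^ 2 - (κ * a - b) ^ 2) / (2 * κ) = κ * (c ^ 2 - a ^ 2) / 2 - b * (c - a) := by
    field_simp; ring
  rw [this]
  nlinarith [mul_le_mul_of_nonneg_left hc hκ.le]

theorem sq_le_sq_mul_soft_sub_of_ne {κ b z : ℝ} (hκ : 0 ≤ κ)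
    (h : |b| - b * (z - soft z) ≠ 0) : b ^ 2 ≤ (κ * soft z - b) ^ 2 := by
  nlinarith [mul_nonneg hκ (neg_nonneg.mpr (soft_mul_nonpos_of_abs_sub_ne h)),
    sq_nonneg (κ * soft z)]

theorem add_two_mul_sum_abs_le_Fpot {ι : Type*} (T : Finset ι) (e : ι → ℝ) (κ : ℝ)
    {m x : ℝ} {n : ℕ} (hm : 0 ≤ m) (hme : ∀ j ∈ T, m ^ 2 ≤ e j ^ 2)
    (hx : ∑ j ∈ T, e j ^ 2 ≤ x) (hn : #T ≤ n) :
    x / (2 * κ) + 2 * ∑ j ∈ T, |e j| ≤ Fpot κ m n x := by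
  have hx0 : 0 ≤ x := (sum_nonneg fun _ _ => sq_nonneg _).trans hx
  have hsum0 : 0 ≤ ∑ j ∈ T, |e j| := sum_nonneg fun _ _ => abs_nonneg _
  have hcs : (∑ j ∈ T, |e j|) ^ 2 ≤ #T * x := by
    refine (sq_sum_le_card_mul_sum_sq ..).trans ?_
    simp only [sq_abs]
    gcongr
  have hcard : #T * m ^ 2 ≤ x := by
    have := card_nsmul_le_sum T (fun j => e j ^ 2) _ hme
    rw [nsmul_eq_mul] at this
    linarith
  rw [Fpot, add_le_add_iff_left]
  split_ifs with h1 h2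
  · suffices T = ∅ by simp [this]
    refine eq_empty_of_forall_notMem fun j hj => ?_
    have := (hme j hj).trans (single_le_sum (fun i _ => sq_nonneg (e i)) hj)
    linarith
  · have hm0 : 0 < m := by
      rcases hm.lt_or_eq with h | rfl
      · exact h
      · simp at h2; linarith
    have hT : (#T : ℝ) ≤ x / m ^ 2 := by rw [le_div_iff₀ (by positivity)]; exact hcard
    have : (∑ j ∈ T, |e j|) ^ 2 ≤ (x / m) ^ 2 := by
      calc _ ≤ #T * x := hcs
        _ ≤ x / m ^ 2 * x := by gcongr
        _ = (x / m) ^ 2 := by ring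
    rw [pow_le_pow_iff_left₀ hsum0 (by positivity) two_ne_zero] at this
    linarith [mul_div_assoc 2 x m]
  · have : (∑ j ∈ T, |e j|) ^ 2 ≤ n * x := hcs.trans (by gcongr)
    linarith [(le_abs_self _).trans (Real.abs_le_sqrt this)]

theorem FpotInv_le {κ m x y : ℝ} {n : ℕ} (hx : 0 ≤ x) (h : y ≤ Fpot κ m n x) :
    FpotInv κ m n y ≤ x :=
  csInf_le ⟨0, fun _ hy => hy.1⟩ ⟨hx, h⟩

theorem bomin_nonneg {p : ℕ} (θo : Option (Fin p) → ℝ) : 0 ≤ bomin θo :=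
  Real.sInf_nonneg (by rintro _ ⟨j, _, rfl⟩; exact abs_nonneg _)

theorem bomin_le_abs {p : ℕ} {θo : Option (Fin p) → ℝ} {j : Fin p} (h : θo (some j) ≠ 0) :
    bomin θo ≤ |θo (some j)| :=
  csInf_le ⟨0, by rintro _ ⟨j, _, rfl⟩; exact abs_nonneg _⟩ ⟨j, h, rfl⟩

theorem Matrix.IsSymm.dotProduct_mulVec_comm {ι : Type*} [Fintype ι] {M : Matrix ι ι ℝ}
    (hM : M.IsSymm) (x y : ι → ℝ) : x ⬝ᵥ M *ᵥ y = y ⬝ᵥ M *ᵥ x := by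
  rw [dotProduct_mulVec, ← mulVec_transpose, hM.eq, dotProduct_comm]

/-- Co-coercivity of `M` on `V`: expand `0 ≤ ⟪Λx - y, M (Λx - y)⟫`. -/
theorem Matrix.IsSymm.dotProduct_self_le_of_quadForm_le {ι : Type*} [Fintype ι]
    {M : Matrix ι ι ℝ} (hM : M.IsSymm) (V : Submodule ℝ (ι → ℝ)) {Λ : ℝ} (hΛ : 0 < Λ)
    (hpsd : ∀ v ∈ V, 0 ≤ v ⬝ᵥ M *ᵥ v) (hle : ∀ v ∈ V, v ⬝ᵥ M *ᵥ v ≤ Λ * (v ⬝ᵥ v))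
    {x y : ι → ℝ} (hx : x ∈ V) (hy : y ∈ V) (hxy : ∀ v ∈ V, v ⬝ᵥ M *ᵥ x = v ⬝ᵥ y) :
    y ⬝ᵥ y ≤ Λ * (x ⬝ᵥ y) := by
  have h := hpsd _ (V.sub_mem (V.smul_mem Λ hx) hy)
  simp only [mulVec_sub, mulVec_smul, dotProduct_sub, sub_dotProduct, dotProduct_smul,
    smul_dotProduct, smul_eq_mul] at h
  rw [hxy x hx, hM.dotProduct_mulVec_comm x y, hxy y hy] at h
  nlinarith [hle y hy]

theorem dotProduct_mulVec_eq_sum {ι : Type*} [Fintype ι] (M : Matrix ι ι ℝ) (v w : ι → ℝ) :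
    v ⬝ᵥ M *ᵥ w = ∑ i, ∑ j, v i * M i j * w j := by
  simp only [dotProduct, mulVec, mul_sum, mul_assoc]

section Calculus

variable {p : ℕ} {ℓ : (Option (Fin p) → ℝ) → ℝ}

noncomputable def hessian (ℓ : (Option (Fin p) → ℝ) → ℝ) (θ : Option (Fin p) → ℝ) :
    Matrix (Option (Fin p)) (Option (Fin p)) ℝ :=
  Matrix.of (pderiv2 ℓ θ)

noncomputable def avgHessian (ℓ : (Option (Fin p) → ℝ) → ℝ) (a b : Option (Fin p) → ℝ) :
    Matrix (Option (Fin p)) (Option (Fin p)) ℝ :=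
  Matrix.of fun i j => ∫ μ in (0:ℝ)..1, pderiv2 ℓ (segPt a b μ) i j

theorem segPt_eq (a b : Option (Fin p) → ℝ) : segPt a b = fun μ => a + μ • (b - a) := by
  ext μ i
  simp [segPt]

@[simp]
theorem segPt_zero (a b : Option (Fin p) → ℝ) : segPt a b 0 = a := by
  simp [segPt_eq]

@[simp]
theorem segPt_one (a b : Option (Fin p) → ℝ) : segPt a b 1 = b := by
  simp [segPt_eq]

theorem hasDerivAt_segPt (a b : Option (Fin p) → ℝ) (μ : ℝ) :
    HasDerivAt (segPt a b) (b - a) μ := by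
  rw [segPt_eq]
  simpa using ((hasDerivAt_id μ).smul_const (b - a)).const_add a

theorem continuous_segPt (a b : Option (Fin p) → ℝ) : Continuous (segPt a b) := by
  rw [segPt_eq]
  fun_prop

theorem contDiff_gradAt (hℓ : ContDiff ℝ 2 ℓ) (i : Option (Fin p)) :
    ContDiff ℝ 1 (gradAt ℓ · i) :=
  (hℓ.fderiv_right (m := 1) (by norm_num)).clm_apply contDiff_const

theorem continuous_hessian (hℓ : ContDiff ℝ 2 ℓ) : Continuous (hessian ℓ) :=
  continuous_pi fun i => continuous_pi fun j =>
    (ContinuousLinearMap.apply ℝ ℝ (Pi.single i 1)).continuous.comp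
      ((contDiff_gradAt hℓ j).continuous_fderiv one_ne_zero)

theorem continuous_hessian_segPt (hℓ : ContDiff ℝ 2 ℓ) (a b : Option (Fin p) → ℝ) :
    Continuous fun μ => hessian ℓ (segPt a b μ) :=
  (continuous_hessian hℓ).comp (continuous_segPt a b)

theorem pderiv2_comm (hℓ : ContDiff ℝ 2 ℓ) (θ : Option (Fin p) → ℝ) (i j : Option (Fin p)) :
    pderiv2 ℓ θ i j = pderiv2 ℓ θ j i := by
  have hd : Differentiable ℝ (fderiv ℝ ℓ) :=
    (hℓ.fderiv_right (m := 1) (by norm_num)).differentiable (by norm_num)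
  have key : ∀ a b, pderiv2 ℓ θ a b
      = fderiv ℝ (fderiv ℝ ℓ) θ (Pi.single a 1) (Pi.single b 1) := fun a b => by
    simp [pderiv2, gradAt, fderiv_clm_apply (hd θ) (differentiableAt_const _)]
  rw [key, key, hℓ.contDiffAt.isSymmSndFDerivAt (by simp)]

theorem avgHessian_isSymm (hℓ : ContDiff ℝ 2 ℓ) (a b : Option (Fin p) → ℝ) :
    (avgHessian ℓ a b).IsSymm :=
  IsSymm.ext fun i j => intervalIntegral.integral_congr fun _ _ => pderiv2_comm hℓ _ j i

theorem hasDerivAt_gradAt_segPt (hℓ : ContDiff ℝ 2 ℓ) (a b : Option (Fin p) → ℝ)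
    (i : Option (Fin p)) (μ : ℝ) :
    HasDerivAt (fun μ => gradAt ℓ (segPt a b μ) i)
      (((b - a) ᵥ* hessian ℓ (segPt a b μ)) i) μ := by
  have hc := ((contDiff_gradAt hℓ i).differentiable one_ne_zero _).hasFDerivAt.comp_hasDerivAt μ
    (hasDerivAt_segPt a b μ)
  refine hc.congr_deriv ?_
  conv_lhs => rw [← univ_sum_single (b - a)]
  simp only [map_sum, vecMul, dotProduct, hessian, of_apply, pderiv2]
  refine sum_congr rfl fun l _ => ?_
  rw [← smul_eq_mul, ← map_smul, ← Pi.single_smul, smul_eq_mul, mul_one]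

theorem gradAt_sub_gradAt (hℓ : ContDiff ℝ 2 ℓ) (a b : Option (Fin p) → ℝ)
    (i : Option (Fin p)) :
    gradAt ℓ b i - gradAt ℓ a i = ((b - a) ᵥ* avgHessian ℓ a b) i := by
  have hftc := intervalIntegral.integral_eq_sub_of_hasDerivAt
    (fun μ _ => hasDerivAt_gradAt_segPt hℓ a b i μ)
    (Continuous.intervalIntegrable (u := fun μ => ((b - a) ᵥ* hessian ℓ (segPt a b μ)) i)
      ((continuous_apply i).comp
        (continuous_const.matrix_vecMul (continuous_hessian_segPt hℓ a b))) 0 1)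
  have hcont : ∀ l, Continuous fun μ => pderiv2 ℓ (segPt a b μ) l i := fun l =>
    (continuous_apply_apply l i).comp (continuous_hessian_segPt hℓ a b)
  rw [segPt_zero, segPt_one] at hftc
  rw [← hftc]
  simp only [vecMul, dotProduct, avgHessian, hessian, of_apply]
  rw [intervalIntegral.integral_finsetSum fun l _ => ((hcont l).const_mul _).intervalIntegrable 0 1]
  simp only [intervalIntegral.integral_const_mul]

theorem quadForm_avgHessian (hℓ : ContDiff ℝ 2 ℓ) (a b v : Option (Fin p) → ℝ) :
    v ⬝ᵥ avgHessian ℓ a b *ᵥ v = ∫ μ in (0:ℝ)..1, v ⬝ᵥ hessian ℓ (segPt a b μ) *ᵥ v := by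
  have hcont : ∀ i j, Continuous fun μ => v i * pderiv2 ℓ (segPt a b μ) i j * v j :=
    fun i j => (continuous_const.mul ((continuous_apply_apply i j).comp
      (continuous_hessian_segPt hℓ a b))).mul continuous_const
  simp only [dotProduct_mulVec_eq_sum, avgHessian, hessian, of_apply]
  rw [intervalIntegral.integral_finsetSum fun i _ =>
    (continuous_finsetSum _ fun j _ => hcont i j).intervalIntegrable 0 1]
  refine sum_congr rfl fun i _ => ?_
  rw [intervalIntegral.integral_finsetSum fun j _ => (hcont i j).intervalIntegrable 0 1]
  simp only [intervalIntegral.integral_mul_const, intervalIntegral.integral_const_mul]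

theorem continuous_quadForm_hessian_segPt (hℓ : ContDiff ℝ 2 ℓ) (a b v : Option (Fin p) → ℝ) :
    Continuous fun μ => v ⬝ᵥ hessian ℓ (segPt a b μ) *ᵥ v :=
  continuous_const.dotProduct ((continuous_hessian_segPt hℓ a b).matrix_mulVec continuous_const)

theorem le_quadForm_avgHessian (hℓ : ContDiff ℝ 2 ℓ) {a b v : Option (Fin p) → ℝ} {c : ℝ}
    (h : ∀ μ ∈ Set.Icc (0:ℝ) 1, c ≤ v ⬝ᵥ hessian ℓ (segPt a b μ) *ᵥ v) :
    c ≤ v ⬝ᵥ avgHessian ℓ a b *ᵥ v := by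
  rw [quadForm_avgHessian hℓ]
  simpa using intervalIntegral.integral_mono_on (μ := MeasureTheory.volume) zero_le_one
    intervalIntegrable_const ((continuous_quadForm_hessian_segPt hℓ a b v).intervalIntegrable 0 1) h

theorem quadForm_avgHessian_le (hℓ : ContDiff ℝ 2 ℓ) {a b v : Option (Fin p) → ℝ} {c : ℝ}
    (h : ∀ μ ∈ Set.Icc (0:ℝ) 1, v ⬝ᵥ hessian ℓ (segPt a b μ) *ᵥ v ≤ c) :
    v ⬝ᵥ avgHessian ℓ a b *ᵥ v ≤ c := by
  rw [quadForm_avgHessian hℓ]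
  simpa using intervalIntegral.integral_mono_on (μ := MeasureTheory.volume) zero_le_one
    ((continuous_quadForm_hessian_segPt hℓ a b v).intervalIntegrable 0 1)
    intervalIntegrable_const h

end Calculus

section Oracle

variable {p : ℕ}

/-- Vectors supported on `S_α`, the intercept together with `S`. -/
def augSupported (S : Finset (Fin p)) : Submodule ℝ (Option (Fin p) → ℝ) where
  carrier := {v | ∀ j, j ∉ S → v (some j) = 0}
  add_mem' hv hw j hj := by simp [hv j hj, hw j hj]
  zero_mem' _ _ := rfl
  smul_mem' c v hv j hj := by simp [hv j hj]

variable {ℓ : (Option (Fin p) → ℝ) → ℝ} {S : Finset (Fin p)} {θo : Option (Fin p) → ℝ}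

theorem dotProduct_eq_of_mem_augSupported {v : Option (Fin p) → ℝ} (hv : v ∈ augSupported S)
    (w : Option (Fin p) → ℝ) :
    v ⬝ᵥ w = v none * w none + ∑ j ∈ S, v (some j) * w (some j) := by
  rw [dotProduct, Fintype.sum_option, sum_subset S.subset_univ fun j _ hj => by simp [hv j hj]]

theorem indicator_mem_augSupported (w : Option (Fin p) → ℝ) :
    (↑(insertNone S) : Set (Option (Fin p))).indicator w ∈ augSupported S := fun j hj =>
  Set.indicator_of_notMem (by simpa using hj) w

theorem dotProduct_indicator_of_mem_augSupported {v : Option (Fin p) → ℝ}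
    (hv : v ∈ augSupported S) (w : Option (Fin p) → ℝ) :
    v ⬝ᵥ (↑(insertNone S) : Set (Option (Fin p))).indicator w = v ⬝ᵥ w := by
  rw [dotProduct_eq_of_mem_augSupported hv, dotProduct_eq_of_mem_augSupported hv,
    Set.indicator_of_mem (by simp)]
  congr 1
  exact sum_congr rfl fun j hj => by rw [Set.indicator_of_mem (by simpa using hj)]

theorem OracleEst.gradAt_eq_zero (hθo : OracleEst ℓ S θo) (hℓ : DifferentiableAt ℝ ℓ θo)
    {i : Option (Fin p)} (hi : i ∈ insertNone S) : gradAt ℓ θo i = 0 := by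
  have hline : HasDerivAt (fun t : ℝ => θo + t • Pi.single i 1) (Pi.single i 1) 0 := by
    simpa using ((hasDerivAt_id (0:ℝ)).smul_const (Pi.single i (1:ℝ))).const_add θo
  have hmin : IsLocalMin (fun t : ℝ => ℓ (θo + t • Pi.single i 1)) 0 := by
    refine Filter.Eventually.of_forall fun t => ?_
    simp only [zero_smul, add_zero]
    refine hθo.2 _ fun j hj => ?_
    have hij : some j ≠ i := fun h => hj (by simpa [← h] using hi)
    simp [hθo.1 j hj, Pi.single_eq_of_ne hij]
  exact hmin.hasDerivAt_eq_zero (hℓ.hasFDerivAt.comp_hasDerivAt_of_eq 0 hline (by simp))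

/-- `∇_{S_α} ℓ(θ)`, extended by zero off `S_α`. -/
noncomputable def restrictedGrad (ℓ : (Option (Fin p) → ℝ) → ℝ) (S : Finset (Fin p))
    (θ : Option (Fin p) → ℝ) : Option (Fin p) → ℝ :=
  (↑(insertNone S) : Set (Option (Fin p))).indicator (gradAt ℓ θ)

theorem restrictedGrad_mem_augSupported (θ : Option (Fin p) → ℝ) :
    restrictedGrad ℓ S θ ∈ augSupported S :=
  indicator_mem_augSupported _

theorem restrictedGrad_dotProduct (θ w : Option (Fin p) → ℝ) :
    restrictedGrad ℓ S θ ⬝ᵥ w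
      = gradAt ℓ θ none * w none + ∑ j ∈ S, gradAt ℓ θ (some j) * w (some j) := by
  rw [dotProduct_eq_of_mem_augSupported (restrictedGrad_mem_augSupported θ), restrictedGrad,
    Set.indicator_of_mem (by simp)]
  congr 1
  exact sum_congr rfl fun j hj => by rw [Set.indicator_of_mem (by simpa using hj)]

theorem dotProduct_avgHessian_mulVec_eq (hℓ : ContDiff ℝ 2 ℓ) (hθo : OracleEst ℓ S θo)
    (θ : Option (Fin p) → ℝ) {v : Option (Fin p) → ℝ} (hv : v ∈ augSupported S) :
    v ⬝ᵥ avgHessian ℓ θ θo *ᵥ (θ - θo) = v ⬝ᵥ restrictedGrad ℓ S θ := by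
  rw [restrictedGrad, ← dotProduct_indicator_of_mem_augSupported hv]
  congr 1
  refine Set.indicator_congr fun i hi => ?_
  have h := gradAt_sub_gradAt hℓ θ θo i
  rw [hθo.gradAt_eq_zero (hℓ.differentiable (by norm_num) θo) hi] at h
  rw [← vecMul_transpose, (avgHessian_isSymm hℓ θ θo).eq, ← neg_sub, neg_vecMul, Pi.neg_apply,
    ← h, zero_sub, neg_neg]

theorem restrictedGrad_bounds (hℓ : ContDiff ℝ 2 ℓ) (hθo : OracleEst ℓ S θo)
    {θ : Option (Fin p) → ℝ} (hθ : θ ∈ augSupported S) {lam Lam : ℝ} (hlam : 0 ≤ lam)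
    (hLam : 0 < Lam)
    (hseg : ∀ μ ∈ Set.Icc (0:ℝ) 1, ∀ v ∈ augSupported S,
      lam * (v ⬝ᵥ v) ≤ v ⬝ᵥ hessian ℓ (segPt θ θo μ) *ᵥ v ∧
        v ⬝ᵥ hessian ℓ (segPt θ θo μ) *ᵥ v ≤ Lam * (v ⬝ᵥ v)) :
    lam * ((θ - θo) ⬝ᵥ (θ - θo)) ≤ (θ - θo) ⬝ᵥ restrictedGrad ℓ S θ ∧
      restrictedGrad ℓ S θ ⬝ᵥ restrictedGrad ℓ S θ
        ≤ Lam * ((θ - θo) ⬝ᵥ restrictedGrad ℓ S θ) := by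
  have hE : θ - θo ∈ augSupported S := sub_mem hθ hθo.1
  have hlow : ∀ v ∈ augSupported S, lam * (v ⬝ᵥ v) ≤ v ⬝ᵥ avgHessian ℓ θ θo *ᵥ v :=
    fun v hv => le_quadForm_avgHessian hℓ fun μ hμ => (hseg μ hμ v hv).1
  have hxy := fun v (hv : v ∈ augSupported S) => dotProduct_avgHessian_mulVec_eq hℓ hθo θ hv
  refine ⟨hxy _ hE ▸ hlow _ hE, ?_⟩
  exact (avgHessian_isSymm hℓ θ θo).dotProduct_self_le_of_quadForm_le _ hLam
    (fun v hv => (mul_nonneg hlam (sum_nonneg fun i _ => mul_self_nonneg (v i))).trans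
      (hlow v hv))
    (fun v hv => quadForm_avgHessian_le hℓ fun μ hμ => (hseg μ hμ v hv).2)
    hE (restrictedGrad_mem_augSupported θ) hxy

end Oracle

section Potential

variable {p : ℕ} {ℓ : (Option (Fin p) → ℝ) → ℝ} {S : Finset (Fin p)} {θo : Option (Fin p) → ℝ}
  {κ δ : ℝ} {θ' : ℕ → Option (Fin p) → ℝ} {z' : ℕ → Fin p → ℝ}

theorem OracleIter.mem_augSupported (h : OracleIter ℓ S κ δ θ' z') (k : ℕ) :
    θ' k ∈ augSupported S :=
  h.2.2.2.1 k

theorem OracleIter.apply_some_eq (h : OracleIter ℓ S κ δ θ' z') (k : ℕ) {j : Fin p}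
    (hj : j ∈ S) : θ' k (some j) = κ * soft (z' k j) := by
  obtain ⟨hz0, hθ0, -, -, -, -, hθ⟩ := h
  cases k with
  | zero => rw [hθ0 j, hz0 j, soft_zero, mul_zero]
  | succ k => exact hθ k j hj

theorem RSCcond.quadForm_hessian_segPt {θstar : Option (Fin p) → ℝ} {lam Lam : ℝ}
    (h : RSCcond ℓ S θstar θo θ' lam Lam) (k : ℕ) :
    ∀ μ ∈ Set.Icc (0:ℝ) 1, ∀ v ∈ augSupported S,
      lam * (v ⬝ᵥ v) ≤ v ⬝ᵥ hessian ℓ (segPt (θ' k) θo μ) *ᵥ v ∧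
        v ⬝ᵥ hessian ℓ (segPt (θ' k) θo μ) *ᵥ v ≤ Lam * (v ⬝ᵥ v) := fun μ hμ v hv => by
  rw [dotProduct_mulVec_eq_sum]
  simpa only [hessian, of_apply, dotProduct, ← sq] using h _ (Or.inl ⟨k, μ, hμ, rfl⟩) v hv

theorem dOrc_sq (S : Finset (Fin p)) (θo : Option (Fin p) → ℝ) (θ' : ℕ → Option (Fin p) → ℝ)
    (k : ℕ) : dOrc S θo θ' k ^ 2
      = (θ' k none - θo none) ^ 2 + ∑ j ∈ S, (θ' k (some j) - θo (some j)) ^ 2 :=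
  Real.sq_sqrt (by positivity)

theorem dOrc_sq_eq_dotProduct {k : ℕ} (hθ : θ' k ∈ augSupported S) (hθo : θo ∈ augSupported S) :
    dOrc S θo θ' k ^ 2 = (θ' k - θo) ⬝ᵥ (θ' k - θo) := by
  rw [dOrc_sq, dotProduct_eq_of_mem_augSupported (sub_mem hθ hθo)]
  simp [sq]

/-- Only coordinates where `βᵒ_j ≠ 0` and `ρ'_{k,j} ≠ sign βᵒ_j` contribute to the `ℓ₁` part of
the potential; each of them has `|β'_{k,j} - βᵒ_j| ≥ |βᵒ_j| ≥ β^o_min`. -/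
theorem PsiD_le_Fpot (hκ : 0 ≤ κ) {k : ℕ} (hβ : ∀ j ∈ S, θ' k (some j) = κ * soft (z' k j)) :
    PsiD S θo κ θ' z' k ≤ Fpot κ (bomin θo) #S (dOrc S θo θ' k ^ 2) := by
  set e : Fin p → ℝ := fun j => θ' k (some j) - θo (some j)
  set term : Fin p → ℝ := fun j => |θo (some j)| - θo (some j) * (z' k j - soft (z' k j))
  set T := S.filter (term · ≠ 0)
  have hsq : ∀ j ∈ T, θo (some j) ^ 2 ≤ e j ^ 2 := fun j hj => by
    obtain ⟨hjS, hj⟩ := mem_filter.mp hj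
    simpa only [e, hβ j hjS] using sq_le_sq_mul_soft_sub_of_ne hκ hj
  have hterm : ∑ j ∈ S, term j ≤ 2 * ∑ j ∈ T, |e j| := by
    rw [← sum_filter_ne_zero, mul_sum]
    exact sum_le_sum fun j hj => (abs_sub_mul_sub_soft_le _ _).trans
      (mul_le_mul_of_nonneg_left (sq_le_sq.mp (hsq j hj)) zero_le_two)
  have hbomin : ∀ j ∈ T, bomin θo ^ 2 ≤ e j ^ 2 := fun j hj => by
    have hb : θo (some j) ≠ 0 := fun h0 => (mem_filter.mp hj).2 (by simp [term, h0])
    calc bomin θo ^ 2 ≤ |θo (some j)| ^ 2 := pow_le_pow_left₀ (bomin_nonneg θo) (bomin_le_abs hb) 2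
      _ ≤ e j ^ 2 := (sq_abs _).trans_le (hsq j hj)
  have hx : ∑ j ∈ T, e j ^ 2 ≤ dOrc S θo θ' k ^ 2 := by
    rw [dOrc_sq]
    exact (sum_le_sum_of_subset_of_nonneg (filter_subset _ S) fun _ _ _ => sq_nonneg _).trans
      (le_add_of_nonneg_left (sq_nonneg _))
  calc PsiD S θo κ θ' z' k = dOrc S θo θ' k ^ 2 / (2 * κ) + ∑ j ∈ S, term j := by
        rw [PsiD, sum_sub_distrib]; ring
    _ ≤ dOrc S θo θ' k ^ 2 / (2 * κ) + 2 * ∑ j ∈ T, |e j| := by gcongr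
    _ ≤ Fpot κ (bomin θo) #S (dOrc S θo θ' k ^ 2) :=
        add_two_mul_sum_abs_le_Fpot T e κ (bomin_nonneg θo) hbomin hx (card_filter_le _ _)

theorem OracleIter.PsiD_succ_sub_le (h : OracleIter ℓ S κ δ θ' z') (hκ : 0 < κ) (k : ℕ) :
    PsiD S θo κ θ' z' (k + 1) - PsiD S θo κ θ' z' k
      ≤ -δ * ((θ' k - θo) ⬝ᵥ restrictedGrad ℓ S (θ' k))
        + κ * δ ^ 2 / 2 * (restrictedGrad ℓ S (θ' k) ⬝ᵥ restrictedGrad ℓ S (θ' k)) := by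
  have hβ := h.apply_some_eq
  obtain ⟨-, -, -, -, hα, hz, -⟩ := h
  set g := gradAt ℓ (θ' k)
  have hcoord : ∀ j ∈ S,
      θo (some j) * (z' k j - soft (z' k j)) - θo (some j) * (z' (k + 1) j - soft (z' (k + 1) j))
        + ((θ' (k + 1) (some j) - θo (some j)) ^ 2 - (θ' k (some j) - θo (some j)) ^ 2) / (2 * κ)
      ≤ -δ * g (some j) * (θ' k (some j) - θo (some j)) + κ * δ ^ 2 / 2 * g (some j) ^ 2 :=
    fun j hj => by
      rw [hβ k hj, hβ (k + 1) hj, hz k j hj]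
      exact soft_step_le κ δ _ _ _ hκ
  have hint : ((θ' (k + 1) none - θo none) ^ 2 - (θ' k none - θo none) ^ 2) / (2 * κ)
      = -δ * g none * (θ' k none - θo none) + κ * δ ^ 2 / 2 * g none ^ 2 := by
    rw [hα k]
    field_simp
    ring
  have hGG : restrictedGrad ℓ S (θ' k) ⬝ᵥ restrictedGrad ℓ S (θ' k)
      = restrictedGrad ℓ S (θ' k) ⬝ᵥ g :=
    dotProduct_indicator_of_mem_augSupported (restrictedGrad_mem_augSupported _) g
  rw [dotProduct_comm, hGG, restrictedGrad_dotProduct, restrictedGrad_dotProduct]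
  calc PsiD S θo κ θ' z' (k + 1) - PsiD S θo κ θ' z' k
      = ∑ j ∈ S, (θo (some j) * (z' k j - soft (z' k j))
            - θo (some j) * (z' (k + 1) j - soft (z' (k + 1) j))
            + ((θ' (k + 1) (some j) - θo (some j)) ^ 2 - (θ' k (some j) - θo (some j)) ^ 2)
              / (2 * κ))
        + ((θ' (k + 1) none - θo none) ^ 2 - (θ' k none - θo none) ^ 2) / (2 * κ) := by
        rw [PsiD, PsiD, dOrc_sq, dOrc_sq]
        simp only [sub_div, sum_add_distrib, sum_sub_distrib, ← sum_div]
        ring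
    _ ≤ ∑ j ∈ S, (-δ * g (some j) * (θ' k (some j) - θo (some j))
            + κ * δ ^ 2 / 2 * g (some j) ^ 2)
        + (-δ * g none * (θ' k none - θo none) + κ * δ ^ 2 / 2 * g none ^ 2) :=
        add_le_add (sum_le_sum hcoord) hint.le
    _ = _ := by
        simp only [g, Pi.sub_apply, sum_add_distrib, mul_add, mul_sum]
        ring_nf

end Potential

theorem glbi_discrete_bihari_general {p : ℕ}
    (ℓ : (Option (Fin p) → ℝ) → ℝ) (hℓ : ContDiff ℝ 2 ℓ)
    (θstar : Option (Fin p) → ℝ) (S : Finset (Fin p))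
    (θo : Option (Fin p) → ℝ) (hθo : OracleEst ℓ S θo)
    (κ δ : ℝ) (hκpos : 0 < κ) (hδpos : 0 < δ)
    (θ' : ℕ → Option (Fin p) → ℝ) (z' : ℕ → Fin p → ℝ)
    (horacle : OracleIter ℓ S κ δ θ' z')
    (lam Lam : ℝ) (hlam : 0 < lam) (hLam : 0 < Lam)
    (hRSC : RSCcond ℓ S θstar θo θ' lam Lam)
    (hlam' : 0 < lam * (1 - κ * δ * Lam / 2)) :
    ∀ k : ℕ,
      PsiD S θo κ θ' z' (k + 1) - PsiD S θo κ θ' z' k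
        ≤ -(δ * (lam * (1 - κ * δ * Lam / 2)) *
            FpotInv κ (bomin θo) S.card (PsiD S θo κ θ' z' k)) := by
  intro k
  set E := θ' k - θo
  set G := restrictedGrad ℓ S (θ' k)
  have hc : 0 < δ * (1 - κ * δ * Lam / 2) := mul_pos hδpos (pos_of_mul_pos_right hlam' hlam.le)
  obtain ⟨hEG, hGG⟩ := restrictedGrad_bounds hℓ hθo (horacle.mem_augSupported k) hlam.le hLam
    (hRSC.quadForm_hessian_segPt k)
  have hF : FpotInv κ (bomin θo) #S (PsiD S θo κ θ' z' k) ≤ E ⬝ᵥ E := by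
    rw [← dOrc_sq_eq_dotProduct (horacle.mem_augSupported k) hθo.1]
    exact FpotInv_le (sq_nonneg _) (PsiD_le_Fpot hκpos.le fun j hj => horacle.apply_some_eq k hj)
  calc _ ≤ -δ * (E ⬝ᵥ G) + κ * δ ^ 2 / 2 * (G ⬝ᵥ G) := horacle.PsiD_succ_sub_le hκpos k
    _ ≤ -(δ * (1 - κ * δ * Lam / 2)) * (E ⬝ᵥ G) := by
        nlinarith [mul_le_mul_of_nonneg_left hGG (by positivity : 0 ≤ κ * δ ^ 2 / 2)]
    _ ≤ -(δ * (1 - κ * δ * Lam / 2)) * (lam * (E ⬝ᵥ E)) :=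
        mul_le_mul_of_nonpos_left hEG (by linarith)
    _ ≤ _ := by nlinarith [mul_le_mul_of_nonneg_left hF (mul_pos hδpos hlam').le]

/-- **Discrete generalized Bihari inequality.**
Under RSC, if `λ' = λ(1 − κδΛ/2) > 0`, then for all `k ≥ 0`,
`Ψ_{k+1} − Ψ_k ≤ −δλ'·F⁻¹(Ψ_k)`. -/
theorem glbi_discrete_bihari {p : ℕ}
    (ℓ : (Option (Fin p) → ℝ) → ℝ) (hℓ : ContDiff ℝ 2 ℓ)
    (θstar : Option (Fin p) → ℝ) (S : Finset (Fin p))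
    (hS : ∀ j, j ∈ S ↔ θstar (some j) ≠ 0)
    (θo : Option (Fin p) → ℝ) (hθo : OracleEst ℓ S θo)
    (κ δ : ℝ) (hκpos : 0 < κ) (hδpos : 0 < δ)
    (θ' : ℕ → Option (Fin p) → ℝ) (z' : ℕ → Fin p → ℝ)
    (horacle : OracleIter ℓ S κ δ θ' z')
    (lam Lam : ℝ) (hlam : 0 < lam) (hLam : 0 < Lam)
    (hRSC : RSCcond ℓ S θstar θo θ' lam Lam)
    (hlam' : 0 < lam * (1 - κ * δ * Lam / 2)) :
    ∀ k : ℕ,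
      PsiD S θo κ θ' z' (k + 1) - PsiD S θo κ θ' z' k
        ≤ -(δ * (lam * (1 - κ * δ * Lam / 2)) *
            FpotInv κ (bomin θo) S.card (PsiD S θo κ θ' z' k)) :=
  glbi_discrete_bihari_general ℓ hℓ θstar S θo hθo κ δ hκpos hδpos θ' z' horacle lam Lam hlam hLam
    hRSC hlam'
end

section
/- Uniform law of large numbers over a ball: Let x⁽¹⁾, …, x⁽ⁿ⁾ be i.i.d. copies of X on (Ω, 𝓕, ℙ), let Ξ = {ξ ∈ ℝ^d : ‖ξ − ξ₀‖₂ ≤ C} for some C > 0 and ξ₀ ∈ ℝ^d, and let h : Ξ × Ω → ℝ satisfy |h(ξ; X) − h(ξ'; X)| ≤ M(X)‖ξ − ξ'‖₂ for all ξ, ξ' ∈ Ξ, where V_M := E[M(X)²] < +∞. Suppose, with E_h(ξ) := E[h(ξ; X)], there exist σ > 0 and 0 < t₀ ≤ +∞ such that E[exp(t(h(ξ; X) − E_h(ξ)))] ≤ exp(σ²t²/2) for all ξ ∈ Ξ and |t| < t₀. Then for any ε > 0 and 0 < δ ≤ 1, P( sup_{ξ∈Ξ} |(1/n)Σ_{i=1}^n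 h(ξ; x⁽ⁱ⁾) − E_h(ξ)| ≥ ε ) ≤ δ/2 + 2 exp( d·log(1 + 16C√(V_M)√d/(εδ)) − nε²/(8(σ² + ε/t₀)) ). -/
/-!
Replace `M` by a measurable Lipschitz bound `M' ≤ |M|` (the supremum of difference quotients over
a countable dense subset of the ball), and fix an `r`-net `T` of the ball. Off the event
`{ε ≤ 4r · (1/n) Σᵢ M'(x⁽ⁱ⁾)}`, the empirical mean moves by less than `ε/4` between a point and a
nearby net point, and `E_h` moves by at most `E[M'] r ≤ √V_M r ≤ ε/4`; hence a deviation `ε`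
somewhere forces a deviation `ε/2` at a net point. Markov's inequality bounds the first event by
`δ/2` for `r = εδ/(8√V_M √d)`. A volume argument gives a net of size `(1 + 2C/r)^d`, and a Chernoff
bound with `t = a / (σ² + a/t₀) < t₀` controls each net point.
-/

open scoped ENNReal NNReal
open MeasureTheory ProbabilityTheory Metric Module Real

lemma ofReal_div_sq_add_mul_toReal_inv_lt {σ a : ℝ} {t₀ : ℝ≥0∞} (hσ : 0 < σ) (ha : 0 < a)
    (ht₀ : 0 < t₀) : ENNReal.ofReal (a / (σ ^ 2 + a * t₀⁻¹.toReal)) < t₀ := by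
  rcases eq_or_ne t₀ ⊤ with rfl | ht₀_top
  · exact ENNReal.ofReal_lt_top
  have ht₀_pos : 0 < t₀.toReal := ENNReal.toReal_pos ht₀.ne' ht₀_top
  have h_lt : a / (σ ^ 2 + a * t₀⁻¹.toReal) < t₀.toReal := by
    rw [div_lt_iff₀ (by positivity), ENNReal.toReal_inv, mul_add, mul_left_comm,
      mul_inv_cancel₀ ht₀_pos.ne', mul_one]
    nlinarith [mul_pos ht₀_pos (pow_pos hσ 2)]
  exact ((ENNReal.ofReal_lt_ofReal_iff ht₀_pos).mpr h_lt).trans_eq (ENNReal.ofReal_toReal ht₀_top)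

lemma chernoff_exponent_le {N a σ β : ℝ} (hN : 0 ≤ N) (hβ : 0 < β) (hσβ : σ ^ 2 ≤ β) :
    -(a / β) * (N * a) + N * (σ ^ 2 * (a / β) ^ 2 / 2) ≤ -N * a ^ 2 / (2 * β) := by
  have h : σ ^ 2 * (a / β) ^ 2 ≤ β * (a / β) ^ 2 := by gcongr
  have e : β * (a / β) ^ 2 = a / β * a := by field_simp
  have e' : -N * a ^ 2 / (2 * β) = N * (-(a / β * a) + a / β * a / 2) := by field_simp; ring
  rw [e']
  nlinarith

def HasSubexponentialMGF {Ω : Type*} [MeasurableSpace Ω] (Y : Ω → ℝ) (σ : ℝ) (t₀ : ℝ≥0∞)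
    (μ : Measure Ω) : Prop :=
  ∀ t : ℝ, ENNReal.ofReal |t| < t₀ →
    ∫⁻ ω, ENNReal.ofReal (exp (t * Y ω)) ∂μ ≤ ENNReal.ofReal (exp (σ ^ 2 * t ^ 2 / 2))

namespace HasSubexponentialMGF

section

variable {Ω Ω' : Type*} [MeasurableSpace Ω] [MeasurableSpace Ω'] {μ : Measure Ω} {ν : Measure Ω'}
  {Y : Ω → ℝ} {σ : ℝ} {t₀ : ℝ≥0∞} {t : ℝ}

lemma neg (hY : HasSubexponentialMGF Y σ t₀ μ) : HasSubexponentialMGF (fun ω ↦ -Y ω) σ t₀ μ := by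
  intro t ht
  simpa [neg_mul_comm] using hY (-t) (by rwa [abs_neg])

lemma of_identDistrib {Y' : Ω' → ℝ} (hY : HasSubexponentialMGF Y σ t₀ μ)
    (hident : IdentDistrib Y' Y ν μ) : HasSubexponentialMGF Y' σ t₀ ν := by
  intro t ht
  exact (hident.comp (by fun_prop : Measurable fun y ↦ ENNReal.ofReal (exp (t * y)))).lintegral_eq
    |>.trans_le (hY t ht)

lemma integrable_exp_mul (hY : HasSubexponentialMGF Y σ t₀ μ) (hmeas : AEMeasurable Y μ)
    (ht : ENNReal.ofReal |t| < t₀) : Integrable (fun ω ↦ exp (t * Y ω)) μ := by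
  refine (integrable_toReal_of_lintegral_ne_top (by fun_prop)
    ((hY t ht).trans_lt ENNReal.ofReal_lt_top).ne).congr ?_
  exact .of_forall fun ω ↦ ENNReal.toReal_ofReal (exp_pos _).le

lemma mgf_le (hY : HasSubexponentialMGF Y σ t₀ μ) (hmeas : AEMeasurable Y μ)
    (ht : ENNReal.ofReal |t| < t₀) : mgf Y μ t ≤ exp (σ ^ 2 * t ^ 2 / 2) := by
  rw [mgf, integral_eq_lintegral_of_nonneg_ae (.of_forall fun ω ↦ (exp_pos _).le) (by fun_prop)]
  exact ENNReal.toReal_le_of_le_ofReal (exp_pos _).le (hY t ht)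

lemma integrable (hY : HasSubexponentialMGF Y σ t₀ μ) (hmeas : AEMeasurable Y μ) (ht₀ : 0 < t₀) :
    Integrable Y μ := by
  obtain ⟨t, ht, htt₀⟩ : ∃ t : ℝ, 0 < t ∧ ENNReal.ofReal t < t₀ := by
    obtain ⟨s, -, hs0, hst₀⟩ := ENNReal.lt_iff_exists_real_btwn.mp ht₀
    exact ⟨s, ENNReal.ofReal_pos.mp hs0, hst₀⟩
  refine (integrable_norm_iff hmeas.aestronglyMeasurable).mp ?_
  simpa using integrable_pow_abs_of_integrable_exp_mul ht.ne'
    (hY.integrable_exp_mul hmeas (by rwa [abs_of_pos ht]))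
    (hY.integrable_exp_mul hmeas (by rwa [abs_neg, abs_of_pos ht])) 1

end

variable {Ω ι : Type*} [MeasurableSpace Ω] {μ : Measure Ω} {σ : ℝ} {t₀ : ℝ≥0∞}

open Finset in
lemma measure_sum_ge_le_of_iIndepFun {Y : ι → Ω → ℝ} (s : Finset ι) (hindep : iIndepFun Y μ)
    (hmeas : ∀ i, Measurable (Y i))
    (hY : ∀ i ∈ s, HasSubexponentialMGF (Y i) σ t₀ μ) (hσ : 0 < σ) (ht₀ : 0 < t₀)
    {a : ℝ} (ha : 0 < a) :
    μ {ω | #s * a ≤ ∑ i ∈ s, Y i ω}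
      ≤ ENNReal.ofReal (exp (-#s * a ^ 2 / (2 * (σ ^ 2 + a * t₀⁻¹.toReal)))) := by
  have := hindep.isProbabilityMeasure
  set β := σ ^ 2 + a * t₀⁻¹.toReal
  have hβ : 0 < β := by positivity
  have ht : ENNReal.ofReal |a / β| < t₀ := by
    rw [abs_of_pos (by positivity)]
    exact ofReal_div_sq_add_mul_toReal_inv_lt hσ ha ht₀
  have h_mgf : mgf (∑ i ∈ s, Y i) μ (a / β) ≤ exp (σ ^ 2 * (a / β) ^ 2 / 2) ^ #s := by
    rw [hindep.mgf_sum hmeas, ← prod_const]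
    exact prod_le_prod (fun _ _ ↦ mgf_nonneg) fun i hi ↦ (hY i hi).mgf_le (hmeas i).aemeasurable ht
  have h_chernoff := measure_ge_le_exp_mul_mgf (#s * a) (by positivity)
    (hindep.integrable_exp_mul_sum hmeas
      fun i hi ↦ (hY i hi).integrable_exp_mul (hmeas i).aemeasurable ht)
  simp only [Finset.sum_apply] at h_chernoff
  rw [← ofReal_measureReal]
  refine ENNReal.ofReal_le_ofReal (h_chernoff.trans ?_)
  calc exp (-(a / β) * (#s * a)) * mgf (∑ i ∈ s, Y i) μ (a / β)
      ≤ exp (-(a / β) * (#s * a)) * exp (σ ^ 2 * (a / β) ^ 2 / 2) ^ #s := by gcongr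
    _ = exp (-(a / β) * (#s * a) + #s * (σ ^ 2 * (a / β) ^ 2 / 2)) := by
      rw [← exp_nat_mul, ← exp_add]
    _ ≤ exp (-#s * a ^ 2 / (2 * β)) :=
      exp_le_exp.mpr (chernoff_exponent_le (by positivity) hβ (by simp [β]; positivity))

lemma measure_abs_mean_sub_ge_le_of_iIndepFun {n : ℕ} {Y : Fin n → Ω → ℝ} {c : ℝ}
    (hindep : iIndepFun Y μ) (hmeas : ∀ i, Measurable (Y i))
    (hY : ∀ i, HasSubexponentialMGF (fun ω ↦ Y i ω - c) σ t₀ μ)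
    (hσ : 0 < σ) (ht₀ : 0 < t₀) {a : ℝ} (ha : 0 < a) :
    μ {ω | a ≤ |(1 / (n : ℝ)) * ∑ i, Y i ω - c|}
      ≤ ENNReal.ofReal (2 * exp (-n * a ^ 2 / (2 * (σ ^ 2 + a * t₀⁻¹.toReal)))) := by
  have h_upper := measure_sum_ge_le_of_iIndepFun (Y := fun i ω ↦ Y i ω - c) Finset.univ
    (hindep.comp (fun _ y ↦ y - c) fun _ ↦ by fun_prop) (fun i ↦ by fun_prop)
    (fun i _ ↦ hY i) hσ ht₀ ha
  have h_lower := measure_sum_ge_le_of_iIndepFun (Y := fun i ω ↦ -(Y i ω - c)) Finset.univ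
    (hindep.comp (fun _ y ↦ -(y - c)) fun _ ↦ by fun_prop) (fun i ↦ by fun_prop)
    (fun i _ ↦ (hY i).neg) hσ ht₀ ha
  simp only [Finset.card_univ, Fintype.card_fin, Finset.sum_neg_distrib] at h_upper h_lower
  -- also for `n = 0`, where `1 / 0 = 0` and both sides vanish
  have h_scale (ω : Ω) : (n : ℝ) * ((1 / (n : ℝ)) * ∑ i, Y i ω - c) = ∑ i, (Y i ω - c) := by
    rcases eq_or_ne n 0 with rfl | hn
    · simp
    · rw [Finset.sum_sub_distrib]; field_simp; simp
  have h_sub : {ω | a ≤ |(1 / (n : ℝ)) * ∑ i, Y i ω - c|}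
      ⊆ {ω | n * a ≤ ∑ i, (Y i ω - c)} ∪ {ω | n * a ≤ -∑ i, (Y i ω - c)} := by
    intro ω hω
    have h : n * a ≤ |∑ i, (Y i ω - c)| := by
      rw [← h_scale, abs_mul, Nat.abs_cast]
      exact mul_le_mul_of_nonneg_left hω.out (Nat.cast_nonneg n)
    exact (le_abs'.mp h).symm.imp_right le_neg.mpr
  calc _ ≤ _ := measure_mono h_sub
    _ ≤ _ := measure_union_le _ _
    _ ≤ _ := add_le_add h_upper h_lower
    _ = _ := by rw [← ENNReal.ofReal_add (by positivity) (by positivity), ← two_mul]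

end HasSubexponentialMGF

section Covering

variable {E : Type*} [NormedAddCommGroup E] [NormedSpace ℝ E] [FiniteDimensional ℝ E]

lemma card_le_of_isSeparated_closedBall {x : E} {C : ℝ} (hC : 0 ≤ C) {r : ℝ≥0} (hr : 0 < r)
    {S : Finset E} (hS : ↑S ⊆ closedBall x C) (hsep : IsSeparated r (S : Set E)) :
    (S.card : ℝ) ≤ (1 + 2 * C / r) ^ finrank ℝ E := by
  borelize E
  set μ : Measure E := Measure.addHaar
  set v := μ (ball 0 1)
  have hv₀ : v ≠ 0 := (measure_ball_pos μ _ one_pos).ne'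
  have hv_top : v ≠ ⊤ := measure_ball_lt_top.ne
  have h_disj : (S : Set E).PairwiseDisjoint fun s ↦ closedBall s (r / 2) := by
    intro s hs t ht hst
    refine closedBall_disjoint_closedBall ?_
    have : (r : ℝ≥0∞) < edist s t := hsep hs ht hst
    rw [edist_dist, ← ENNReal.ofReal_coe_nnreal] at this
    linarith [(ENNReal.ofReal_lt_ofReal_iff'.mp this).1]
  have h_union : (⋃ s ∈ S, closedBall s (r / 2 : ℝ)) ⊆ closedBall x (C + r / 2) := by
    simp only [Set.iUnion_subset_iff]
    intro s hs
    exact closedBall_subset_closedBall' (by linarith [mem_closedBall.mp (hS hs)])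
  have h_vol : (S.card : ℝ≥0∞) * (ENNReal.ofReal ((r / 2) ^ finrank ℝ E) * v)
      ≤ ENNReal.ofReal ((C + r / 2) ^ finrank ℝ E) * v := by
    calc (S.card : ℝ≥0∞) * (ENNReal.ofReal ((r / 2) ^ finrank ℝ E) * v)
        = ∑ s ∈ S, μ (closedBall s (r / 2)) := by
          simp [Measure.addHaar_closedBall μ _ (by positivity : (0 : ℝ) ≤ r / 2), v]
      _ = μ (⋃ s ∈ S, closedBall s (r / 2)) :=
          (measure_biUnion_finset h_disj fun _ _ ↦ measurableSet_closedBall).symm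
      _ ≤ μ (closedBall x (C + r / 2)) := measure_mono h_union
      _ = _ := Measure.addHaar_closedBall μ _ (by positivity)
  rw [← mul_assoc, ENNReal.mul_le_mul_iff_left hv₀ hv_top, ← ENNReal.ofReal_natCast,
    ← ENNReal.ofReal_mul (by positivity), ENNReal.ofReal_le_ofReal_iff (by positivity),
    ← le_div_iff₀ (by positivity), ← div_pow] at h_vol
  calc (S.card : ℝ) ≤ _ := h_vol
    _ = _ := by congr 1; field_simp; ring

lemma exists_finset_isCover_closedBall_card_le (x : E) {C : ℝ} (hC : 0 ≤ C) {r : ℝ≥0}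
    (hr : 0 < r) :
    ∃ T : Finset E, ↑T ⊆ closedBall x C ∧ IsCover r (closedBall x C) T ∧
      (T.card : ℝ) ≤ (1 + 2 * C / r) ^ finrank ℝ E := by
  have h_packing : packingNumber r (closedBall x C) ≠ ⊤ := by
    obtain ⟨N, -, hN_fin, hN⟩ :=
      exists_finite_isCover_of_isCompact (ε := r / 2) (div_pos hr two_pos).ne'
        (isCompact_closedBall x C)
    have h := packingNumber_two_mul_le_externalCoveringNumber (r / 2) (closedBall x C)
    rw [mul_div_cancel₀ _ two_ne_zero] at h
    exact ne_top_of_le_ne_top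
      (hN.externalCoveringNumber_le_encard.trans_lt hN_fin.encard_lt_top).ne h
  have h_fin : (maximalSeparatedSet r (closedBall x C)).Finite := by
    rw [← Set.encard_ne_top_iff, encard_maximalSeparatedSet h_packing]
    exact h_packing
  refine ⟨h_fin.toFinset, by simpa using maximalSeparatedSet_subset,
    by simpa using isCover_maximalSeparatedSet h_packing,
    card_le_of_isSeparated_closedBall hC hr (by simpa using maximalSeparatedSet_subset)
      (by simpa using isSeparated_maximalSeparatedSet)⟩

lemma exists_finset_isCover_closedBall_mul_radius_le (x : E) {C K W η : ℝ} (hC : 0 ≤ C)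
    (hK : 0 ≤ K) (hKW : K ≤ W) (hη : 0 < η) :
    ∃ (T : Finset E) (r : ℝ≥0), ↑T ⊆ closedBall x C ∧ IsCover r (closedBall x C) T ∧
      (T.card : ℝ) ≤ (1 + 2 * C * W * √(finrank ℝ E) / η) ^ finrank ℝ E ∧ K * r ≤ η := by
  -- the radius `η / (W √d)` used in general needs `d ≠ 0` and `W ≠ 0`; otherwise `{x}` is a net
  have hx : (({x} : Finset E) : Set E) ⊆ closedBall x C := by simpa using hC
  rcases Nat.eq_zero_or_pos (finrank ℝ E) with hd | hd
  · have : Subsingleton E := finrank_zero_iff.mp hd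
    refine ⟨{x}, 0, hx, ?_, by simp [hd], by simpa using hη.le⟩
    simpa using fun y _ ↦ Subsingleton.elim y x
  rcases (hK.trans hKW).eq_or_lt with rfl | hW
  · obtain rfl : K = 0 := le_antisymm hKW hK
    refine ⟨{x}, C.toNNReal, hx, fun y hy ↦ ⟨x, by simp, ?_⟩, by simp, by simpa using hη.le⟩
    simpa [edist_dist, hC] using mem_closedBall.mp hy
  have hd' : 1 ≤ √(finrank ℝ E : ℝ) := Real.one_le_sqrt.mpr (by exact_mod_cast hd)
  have hρ : 0 < η / (W * √(finrank ℝ E)) := by positivity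
  obtain ⟨T, hTs, hT, hcard⟩ :=
    exists_finset_isCover_closedBall_card_le x hC (Real.toNNReal_pos.mpr hρ)
  rw [Real.coe_toNNReal _ hρ.le] at hcard
  refine ⟨T, _, hTs, hT, hcard.trans_eq ?_, ?_⟩
  · field_simp
  · calc K * (η / (W * √(finrank ℝ E))).toNNReal ≤ W * (η / (W * √(finrank ℝ E))) := by
          rw [Real.coe_toNNReal _ hρ.le]; gcongr
      _ = η / √(finrank ℝ E) := by field_simp
      _ ≤ η := div_le_self hη.le hd'

end Covering

lemma exists_measurable_lipschitz_bound {P E : Type*} [PseudoMetricSpace P]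
    [TopologicalSpace.SeparableSpace P] [MeasurableSpace E] {h : P → E → ℝ}
    (hmeas : ∀ p, Measurable (h p)) {M : E → ℝ}
    (hLip : ∀ p q e, |h p e - h q e| ≤ M e * dist p q) :
    ∃ M' : E → ℝ, Measurable M' ∧ (∀ e, 0 ≤ M' e) ∧ (∀ e, M' e ≤ |M e|) ∧
      ∀ p q e, |h p e - h q e| ≤ M' e * dist p q := by
  obtain ⟨D, hD_count, hD_dense⟩ := TopologicalSpace.exists_countable_dense P
  have := hD_count.to_subtype
  set ratio : D × D → E → ℝ := fun pq e ↦ |h pq.1 e - h pq.2 e| / dist (pq.1 : P) pq.2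
  have h_ratio_le (pq : D × D) (e : E) : ratio pq e ≤ |M e| := by
    rcases (dist_nonneg (x := (pq.1 : P)) (y := pq.2)).eq_or_lt' with h0 | hpos
    · simp [ratio, h0]
    · exact (div_le_iff₀ hpos).mpr ((hLip _ _ e).trans (by gcongr; exact le_abs_self _))
  refine ⟨fun e ↦ ⨆ pq, ratio pq e, Measurable.iSup fun pq ↦ by fun_prop,
    fun e ↦ Real.iSup_nonneg fun _ ↦ by positivity,
    fun e ↦ Real.iSup_le (h_ratio_le · e) (abs_nonneg _), fun p q e ↦ ?_⟩
  have h_cont : Continuous fun p ↦ h p e :=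
    (LipschitzWith.of_dist_le_mul (K := Real.nnabs (M e)) fun p q ↦ by
      simpa [Real.dist_eq] using (hLip p q e).trans (by gcongr; exact le_abs_self _)).continuous
  refine isClosed_property2 (p := fun p q ↦ |h p e - h q e| ≤ (⨆ pq, ratio pq e) * dist p q)
    hD_dense.denseRange_val (isClosed_le (by fun_prop) (by fun_prop)) (fun a b ↦ ?_) p q
  rcases (dist_nonneg (x := (a : P)) (y := b)).eq_or_lt' with h0 | hpos
  · simpa [h0] using hLip a b e
  · rw [← div_le_iff₀ hpos]
    exact le_ciSup ⟨|M e|, Set.forall_mem_range.mpr (h_ratio_le · e)⟩ (a, b)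

lemma exists_mem_abs_sub_le_of_isCover {P : Type*} [PseudoMetricSpace P] {s T : Set P}
    {r : ℝ≥0} (hTs : T ⊆ s) (hT : IsCover r s T) {F G : P → ℝ} {A K : ℝ} (hA : 0 ≤ A)
    (hK : 0 ≤ K) (hF : ∀ p ∈ s, ∀ q ∈ s, |F p - F q| ≤ A * dist p q)
    (hG : ∀ p ∈ s, ∀ q ∈ s, |G p - G q| ≤ K * dist p q) {p : P} (hp : p ∈ s) :
    ∃ t ∈ T, |F p - G p| ≤ (A + K) * r + |F t - G t| := by
  obtain ⟨t, ht, hpt⟩ := hT hp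
  have hdist : dist p t ≤ r := by
    rw [← coe_nndist]
    exact NNReal.coe_le_coe.mpr (edist_le_coe.mp hpt)
  refine ⟨t, ht, ?_⟩
  have hF' := (hF p hp t (hTs ht)).trans (mul_le_mul_of_nonneg_left hdist hA)
  have hG' := (hG t (hTs ht) p hp).trans (mul_le_mul_of_nonneg_left (dist_comm p t ▸ hdist) hK)
  have h₁ := abs_sub_le (F p) (F t) (G p)
  have h₂ := abs_sub_le (F t) (G t) (G p)
  linarith

lemma abs_mean_sub_mean_le {n : ℕ} {a b w : Fin n → ℝ} {c : ℝ} (h : ∀ i, |a i - b i| ≤ w i * c) :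
    |(1 / (n : ℝ)) * ∑ i, a i - (1 / (n : ℝ)) * ∑ i, b i| ≤ ((1 / (n : ℝ)) * ∑ i, w i) * c := by
  rw [← mul_sub, ← Finset.sum_sub_distrib, abs_mul, abs_of_nonneg (by positivity), mul_assoc,
    Finset.sum_mul]
  gcongr
  exact (Finset.abs_sum_le_sum_abs _ _).trans (Finset.sum_le_sum fun i _ ↦ h i)

lemma measure_iSup_ge_le_add_sum_of_isCover {Ω E P : Type*} [MeasurableSpace Ω]
    [PseudoMetricSpace P] {μ : Measure Ω} {n : ℕ} {x : Fin n → Ω → E} {s : Set P}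
    {T : Finset P} {r : ℝ≥0} (hTs : ↑T ⊆ s) (hT : IsCover r s T) {h : P → E → ℝ} {M : E → ℝ}
    (hM : ∀ e, 0 ≤ M e)
    (hLip : ∀ p ∈ s, ∀ q ∈ s, ∀ e, |h p e - h q e| ≤ M e * dist p q) {G : P → ℝ} {K : ℝ}
    (hK : 0 ≤ K) (hG : ∀ p ∈ s, ∀ q ∈ s, |G p - G q| ≤ K * dist p q) {ε : ℝ}
    (hKr : K * r ≤ ε / 4) :
    μ {ω | ε ≤ ⨆ p ∈ s, |(1 / (n : ℝ)) * ∑ i, h p (x i ω) - G p|}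
      ≤ μ {ω | ε ≤ 4 * r * ((1 / (n : ℝ)) * ∑ i, M (x i ω))}
        + ∑ t ∈ T, μ {ω | ε / 2 ≤ |(1 / (n : ℝ)) * ∑ i, h t (x i ω) - G t|} := by
  have h_sub : {ω | ε ≤ ⨆ p ∈ s, |(1 / (n : ℝ)) * ∑ i, h p (x i ω) - G p|}
      ⊆ {ω | ε ≤ 4 * r * ((1 / (n : ℝ)) * ∑ i, M (x i ω))}
        ∪ ⋃ t ∈ T, {ω | ε / 2 ≤ |(1 / (n : ℝ)) * ∑ i, h t (x i ω) - G t|} := by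
    intro ω hω
    by_contra h_not
    simp only [Set.mem_union, Set.mem_iUnion, Set.mem_ofPred_eq, not_or, not_exists, not_le]
      at h_not
    obtain ⟨h_mean, h_dev⟩ := h_not
    set A := (1 / (n : ℝ)) * ∑ i, M (x i ω)
    have hA : 0 ≤ A := mul_nonneg (by positivity) (Finset.sum_nonneg fun i _ ↦ hM _)
    have h_sup : ⨆ p ∈ s, |(1 / (n : ℝ)) * ∑ i, h p (x i ω) - G p| ≤ A * r + 3 * ε / 4 := by
      refine Real.iSup_le (fun p ↦ Real.iSup_le (fun hp ↦ ?_) (by nlinarith)) (by nlinarith)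
      obtain ⟨t, ht, hpt⟩ := exists_mem_abs_sub_le_of_isCover (F := fun p ↦ (1 / (n : ℝ)) *
          ∑ i, h p (x i ω)) hTs hT hA hK
        (fun p hp q hq ↦ abs_mean_sub_mean_le fun i ↦ hLip p hp q hq _) hG hp
      linarith [(h_dev t ht).le]
    linarith [hω.out]
  calc _ ≤ _ := measure_mono h_sub
    _ ≤ _ := measure_union_le _ _
    _ ≤ _ := add_le_add_right (measure_biUnion_finset_le T _) _

section

variable {Ω : Type*} [MeasurableSpace Ω] {μ : Measure Ω}

lemma integral_le_sqrt_integral_sq [IsProbabilityMeasure μ] {f : Ω → ℝ} (hf : MemLp f 2 μ) :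
    ∫ ω, f ω ∂μ ≤ √(∫ ω, f ω ^ 2 ∂μ) := by
  have h := variance_nonneg f μ
  rw [variance_eq_sub hf] at h
  exact (le_abs_self _).trans (Real.abs_le_sqrt (by simpa using h))

lemma memLp_two_of_sq_le {f g : Ω → ℝ} (hf : AEStronglyMeasurable f μ)
    (hg : Integrable (fun ω ↦ g ω ^ 2) μ) (hfg : ∀ ω, f ω ^ 2 ≤ g ω ^ 2) : MemLp f 2 μ :=
  (memLp_two_iff_integrable_sq hf).mpr <| hg.mono (hf.pow 2) <| .of_forall fun ω ↦ by
    simpa only [Pi.pow_apply, Real.norm_eq_abs, abs_pow, sq_abs] using hfg ω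

lemma abs_integral_sub_integral_le {f g M : Ω → ℝ} (hf : Integrable f μ) (hg : Integrable g μ)
    (hM : Integrable M μ) {c : ℝ} (h : ∀ ω, |f ω - g ω| ≤ M ω * c) :
    |∫ ω, f ω ∂μ - ∫ ω, g ω ∂μ| ≤ (∫ ω, M ω ∂μ) * c := by
  rw [← integral_sub hf hg, ← integral_mul_const]
  simpa only [Real.norm_eq_abs] using norm_integral_le_of_norm_le (f := fun ω ↦ f ω - g ω)
    (hM.mul_const c) (.of_forall fun ω ↦ by simpa only [Real.norm_eq_abs] using h ω)

variable {E : Type*} [MeasurableSpace E] {n : ℕ} {x : Fin n → Ω → E} {X₀ : Ω → E} {σ : ℝ}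
  {t₀ : ℝ≥0∞}

lemma measure_mul_sampleMean_ge_le [IsFiniteMeasure μ] (hident : ∀ i, IdentDistrib (x i) X₀ μ μ)
    {f : E → ℝ} (hf : Measurable f) (hf₀ : ∀ e, 0 ≤ f e) (hint : Integrable (fun ω ↦ f (X₀ ω)) μ)
    {k ε : ℝ} (hk : 0 ≤ k) (hε : 0 < ε) :
    μ {ω | ε ≤ k * ((1 / (n : ℝ)) * ∑ i, f (x i ω))}
      ≤ ENNReal.ofReal (k * (∫ ω, f (X₀ ω) ∂μ) / ε) := by
  have h_int (i : Fin n) : Integrable (fun ω ↦ f (x i ω)) μ :=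
    ((hident i).comp hf).integrable_iff.mpr hint
  have h_mean : ∫ ω, k * ((1 / (n : ℝ)) * ∑ i, f (x i ω)) ∂μ ≤ k * ∫ ω, f (X₀ ω) ∂μ := by
    have h_eq (i : Fin n) : ∫ ω, f (x i ω) ∂μ = ∫ ω, f (X₀ ω) ∂μ :=
      ((hident i).comp hf).integral_eq
    rw [integral_const_mul, integral_const_mul, integral_finsetSum _ fun i _ ↦ h_int i]
    simp only [h_eq, Finset.sum_const, Finset.card_univ, Fintype.card_fin, nsmul_eq_mul]
    gcongr
    rcases eq_or_ne n 0 with rfl | hn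
    · have : 0 ≤ ∫ ω, f (X₀ ω) ∂μ := integral_nonneg fun ω ↦ hf₀ (X₀ ω)
      simpa
    · field_simp; rfl
  have h_markov := mul_meas_ge_le_integral_of_nonneg
    (f := fun ω ↦ k * ((1 / (n : ℝ)) * ∑ i, f (x i ω)))
    (.of_forall fun ω ↦ mul_nonneg hk <|
      mul_nonneg (by positivity) (Finset.sum_nonneg fun i _ ↦ hf₀ (x i ω)))
    (((integrable_finsetSum Finset.univ fun i _ ↦ h_int i).const_mul _).const_mul k) ε
  rw [← ofReal_measureReal]
  exact ENNReal.ofReal_le_ofReal ((le_div_iff₀' hε).mpr (h_markov.trans h_mean))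

lemma measure_abs_sampleMean_sub_ge_le (hmeas : ∀ i, Measurable (x i)) (hindep : iIndepFun x μ)
    (hident : ∀ i, IdentDistrib (x i) X₀ μ μ) {g : E → ℝ} (hg : Measurable g) {c : ℝ}
    (hg_sub : HasSubexponentialMGF (fun ω ↦ g (X₀ ω) - c) σ t₀ μ) (hσ : 0 < σ) (ht₀ : 0 < t₀)
    {a : ℝ} (ha : 0 < a) :
    μ {ω | a ≤ |(1 / (n : ℝ)) * ∑ i, g (x i ω) - c|}
      ≤ ENNReal.ofReal (2 * exp (-n * a ^ 2 / (2 * (σ ^ 2 + a * t₀⁻¹.toReal)))) :=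
  HasSubexponentialMGF.measure_abs_mean_sub_ge_le_of_iIndepFun
    (hindep.comp _ fun _ ↦ hg) (fun i ↦ hg.comp (hmeas i))
    (fun i ↦ hg_sub.of_identDistrib ((hident i).comp (u := fun e ↦ g e - c) (by fun_prop)))
    hσ ht₀ ha

theorem measure_iSup_abs_sampleMean_sub_ge_le_of_isCover {P : Type*} [PseudoMetricSpace P]
    [IsProbabilityMeasure μ] (hmeas : ∀ i, Measurable (x i)) (hmeas₀ : Measurable X₀)
    (hindep : iIndepFun x μ) (hident : ∀ i, IdentDistrib (x i) X₀ μ μ) {s : Set P}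
    {T : Finset P} {r : ℝ≥0} (hTs : ↑T ⊆ s) (hT : IsCover r s T) {h : P → E → ℝ}
    (hmeas_h : ∀ p, Measurable (h p)) {M : E → ℝ} (hM_meas : Measurable M)
    (hM_nonneg : ∀ e, 0 ≤ M e) (hM_int : Integrable (fun ω ↦ M (X₀ ω)) μ)
    (hLip : ∀ p ∈ s, ∀ q ∈ s, ∀ e, |h p e - h q e| ≤ M e * dist p q) {G : P → ℝ}
    (hG : ∀ p, G p = ∫ ω, h p (X₀ ω) ∂μ)
    (hsub : ∀ p ∈ s, HasSubexponentialMGF (fun ω ↦ h p (X₀ ω) - G p) σ t₀ μ)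
    (hσ : 0 < σ) (ht₀ : 0 < t₀) {ε : ℝ} (hε : 0 < ε) (hr : (∫ ω, M (X₀ ω) ∂μ) * r ≤ ε / 4) :
    μ {ω | ε ≤ ⨆ p ∈ s, |(1 / (n : ℝ)) * ∑ i, h p (x i ω) - G p|}
      ≤ ENNReal.ofReal (4 * r * (∫ ω, M (X₀ ω) ∂μ) / ε
        + T.card * (2 * exp (-n * (ε / 2) ^ 2 / (2 * (σ ^ 2 + ε / 2 * t₀⁻¹.toReal))))) := by
  have hM_mean : 0 ≤ ∫ ω, M (X₀ ω) ∂μ := integral_nonneg fun ω ↦ hM_nonneg (X₀ ω)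
  have h_int (p) (hp : p ∈ s) : Integrable (fun ω ↦ h p (X₀ ω)) μ := by
    simpa [sub_eq_add_neg, integrable_add_const_iff] using
      (hsub p hp).integrable (by fun_prop) ht₀
  have hG_lip (p) (hp : p ∈ s) (q) (hq : q ∈ s) :
      |G p - G q| ≤ (∫ ω, M (X₀ ω) ∂μ) * dist p q := by
    rw [hG, hG]
    exact abs_integral_sub_integral_le (h_int p hp) (h_int q hq) hM_int fun ω ↦ hLip p hp q hq _
  calc _ ≤ _ := measure_iSup_ge_le_add_sum_of_isCover hTs hT hM_nonneg hLip hM_mean hG_lip hr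
    _ ≤ ENNReal.ofReal (4 * r * (∫ ω, M (X₀ ω) ∂μ) / ε) + ∑ t ∈ T, ENNReal.ofReal
          (2 * exp (-n * (ε / 2) ^ 2 / (2 * (σ ^ 2 + ε / 2 * t₀⁻¹.toReal)))) :=
        add_le_add
          (measure_mul_sampleMean_ge_le hident hM_meas hM_nonneg hM_int (by positivity) hε)
          (Finset.sum_le_sum fun t ht ↦ measure_abs_sampleMean_sub_ge_le hmeas hindep hident
            (hmeas_h t) (hsub t (hTs ht)) hσ ht₀ (half_pos hε))
    _ = _ := by
        rw [Finset.sum_const, nsmul_eq_mul, ← ENNReal.ofReal_natCast,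
          ← ENNReal.ofReal_mul (by positivity),
          ← ENNReal.ofReal_add (div_nonneg (mul_nonneg (by positivity) hM_mean) hε.le)
            (by positivity)]

end

lemma card_mul_two_exp_le {N L σ τ ε : ℝ} {n d : ℕ} (hL : 0 < L) (hN : N ≤ L ^ d) (hσ : 0 < σ)
    (hτ : 0 ≤ τ) (hε : 0 < ε) :
    N * (2 * exp (-n * (ε / 2) ^ 2 / (2 * (σ ^ 2 + ε / 2 * τ))))
      ≤ 2 * exp (d * log L - n * ε ^ 2 / (8 * (σ ^ 2 + ε * τ))) := by
  have h_exponent : -n * (ε / 2) ^ 2 / (2 * (σ ^ 2 + ε / 2 * τ))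
      ≤ -(n * ε ^ 2 / (8 * (σ ^ 2 + ε * τ))) := by
    rw [neg_mul, neg_div, neg_le_neg_iff, div_le_div_iff₀ (by positivity) (by positivity)]
    nlinarith [mul_nonneg (mul_nonneg (Nat.cast_nonneg (α := ℝ) n) (pow_pos hε 3).le) hτ]
  calc N * (2 * exp (-n * (ε / 2) ^ 2 / (2 * (σ ^ 2 + ε / 2 * τ))))
      ≤ exp (d * log L) * (2 * exp (-(n * ε ^ 2 / (8 * (σ ^ 2 + ε * τ))))) := by
        rw [exp_nat_mul, exp_log hL]
        gcongr
    _ = 2 * exp (d * log L - n * ε ^ 2 / (8 * (σ ^ 2 + ε * τ))) := by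
        rw [sub_eq_add_neg, exp_add]; ring

/-- **Uniform law of large numbers over a ball.**
For i.i.d. copies `x⁽ⁱ⁾` of `X`, a Lipschitz-in-parameter family `h(ξ; ·)` over the
Euclidean ball `Ξ = {‖ξ − ξ₀‖₂ ≤ C}` with `E[M(X)²] = V_M < ∞`, and a uniform
sub-Gaussian MGF bound, for any `ε > 0` and `0 < δ ≤ 1`,
`P(sup_{ξ∈Ξ} |(1/n)Σᵢ h(ξ; x⁽ⁱ⁾) − E_h(ξ)| ≥ ε)
  ≤ δ/2 + 2 exp(d log(1 + 16C√(V_M)√d/(εδ)) − nε²/(8(σ² + ε/t₀)))`. -/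
theorem uniform_lln_ball
    {Ω E : Type*} [MeasurableSpace Ω] [MeasurableSpace E]
    (μ : Measure Ω) [IsProbabilityMeasure μ]
    (n d : ℕ) (x : Fin n → Ω → E) (X₀ : Ω → E)
    (hmeas : ∀ i, Measurable (x i)) (hmeas₀ : Measurable X₀)
    (hindep : iIndepFun x μ)
    (hident : ∀ i, IdentDistrib (x i) X₀ μ μ)
    (C : ℝ) (hC : 0 < C) (ξ₀ : EuclideanSpace ℝ (Fin d))
    (h : EuclideanSpace ℝ (Fin d) → E → ℝ)
    (hmeas_h : ∀ ξ, Measurable (h ξ))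
    (M : E → ℝ) (VM : ℝ)
    (hVM : VM = ∫ ω, (M (X₀ ω)) ^ 2 ∂μ)
    (hVMfin : Integrable (fun ω => (M (X₀ ω)) ^ 2) μ)
    (hLip : ∀ ξ ∈ Metric.closedBall ξ₀ C, ∀ ξ' ∈ Metric.closedBall ξ₀ C, ∀ e : E,
      |h ξ e - h ξ' e| ≤ M e * ‖ξ - ξ'‖)
    (Eh : EuclideanSpace ℝ (Fin d) → ℝ) (hEh : ∀ ξ, Eh ξ = ∫ ω, h ξ (X₀ ω) ∂μ)
    (σ : ℝ) (hσ : 0 < σ) (t₀ : ℝ≥0∞) (ht₀ : 0 < t₀)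
    (hmgf : ∀ ξ ∈ Metric.closedBall ξ₀ C, ∀ t : ℝ, ENNReal.ofReal |t| < t₀ →
      ∫⁻ ω, ENNReal.ofReal (Real.exp (t * (h ξ (X₀ ω) - Eh ξ))) ∂μ
        ≤ ENNReal.ofReal (Real.exp (σ ^ 2 * t ^ 2 / 2)))
    (ε δ : ℝ) (hε : 0 < ε) (hδ : 0 < δ) (hδ1 : δ ≤ 1) :
    μ {ω | ε ≤ ⨆ ξ ∈ Metric.closedBall ξ₀ C,
          |(1 / (n : ℝ)) * ∑ i, h ξ (x i ω) - Eh ξ|}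
      ≤ ENNReal.ofReal (δ / 2 +
          2 * Real.exp ((d : ℝ) *
              Real.log (1 + 16 * C * Real.sqrt VM * Real.sqrt d / (ε * δ)) -
            (n : ℝ) * ε ^ 2 / (8 * (σ ^ 2 + ε * t₀⁻¹.toReal)))) := by
  obtain ⟨M', hM'_meas, hM'_nonneg, hM'_le, hM'_lip⟩ := exists_measurable_lipschitz_bound
    (P := closedBall ξ₀ C) (h := fun ξ ↦ h ξ) (fun ξ ↦ hmeas_h ξ)
    fun ξ ξ' e ↦ by rw [Subtype.dist_eq, dist_eq_norm]; exact hLip ξ ξ.2 ξ' ξ'.2 e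
  have hM'_sq_le (e : E) : M' e ^ 2 ≤ M e ^ 2 := by
    simpa only [sq_abs] using pow_le_pow_left₀ (hM'_nonneg e) (hM'_le e) 2
  have hM'_memLp : MemLp (fun ω ↦ M' (X₀ ω)) 2 μ :=
    memLp_two_of_sq_le (hM'_meas.comp hmeas₀).aestronglyMeasurable hVMfin
      fun ω ↦ hM'_sq_le (X₀ ω)
  have hM'_mean : ∫ ω, M' (X₀ ω) ∂μ ≤ √VM :=
    (integral_le_sqrt_integral_sq hM'_memLp).trans <| Real.sqrt_le_sqrt <|
      hVM ▸ integral_mono hM'_memLp.integrable_sq hVMfin fun ω ↦ hM'_sq_le (X₀ ω)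
  obtain ⟨T, r, hTs, hT, hcard, hr⟩ := exists_finset_isCover_closedBall_mul_radius_le ξ₀ hC.le
    (integral_nonneg fun ω ↦ hM'_nonneg (X₀ ω)) hM'_mean (by positivity : 0 < ε * δ / 8)
  have hL : 2 * C * √VM * √d / (ε * δ / 8) = 16 * C * √VM * √d / (ε * δ) := by
    field_simp; ring
  rw [finrank_euclideanSpace_fin, hL] at hcard
  refine (measure_iSup_abs_sampleMean_sub_ge_le_of_isCover hmeas hmeas₀ hindep hident hTs hT
    hmeas_h hM'_meas hM'_nonneg (hM'_memLp.integrable one_le_two)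
    (fun ξ hξ ξ' hξ' ↦ hM'_lip ⟨ξ, hξ⟩ ⟨ξ', hξ'⟩) hEh hmgf hσ ht₀ hε (by nlinarith)).trans
    (ENNReal.ofReal_le_ofReal (add_le_add ?_
      (card_mul_two_exp_le (by positivity) hcard hσ ENNReal.toReal_nonneg hε)))
  rw [div_le_iff₀ hε]
  nlinarith
end

section
/- Moment generating function control: Let U, V be random variables with |U| ≤ V almost surely, and suppose there exist σ > 0, 0 < t₀ ≤ +∞, and c ≥ 1 such that E[exp(tV)] ≤ c·exp(σ²t²/2) for all 0 ≤ t < t₀. Then E[exp(t(U − E[U]))] ≤ exp( e·c²·(σ² + 1/t₀²)·t² ) for all |t| < t₀. -/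
open scoped ENNReal
open MeasureTheory

/-!
Put `X = U - E[U]` and `W = V + E[V]`. Then `|X| ≤ W`, and by Jensen
`E[exp(bW)] = exp(b E[V]) E[exp(bV)] ≤ E[exp(bV)]² ≤ c² exp(σ²b²)` for `0 ≤ b < t₀`.
Let `ρ = max(σ, 1/t₀)`. When `|t| ρ` is small, integrate the Taylor bound
`exp z ≤ 1 + z + z²/2 · exp |z|` at `z = tX`: the linear term has mean zero, and
`W² ≤ 4/(eδ)² · exp(δW)` with `δ = 11/(20ρ)` turns the remainder into
`t²/2 · 4/(eδ)² · E[exp((|t| + δ)W)] ≤ e c² ρ² t²`, because `(|t| + δ) ρ < 1`.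
When `|t| ρ` is large, `(σ² + 1/t₀²) t²` is bounded below, and already the crude bound
`E[exp(tX)] ≤ E[exp(|t|W)] ≤ c² exp(σ²t²)` is at most `exp(e c² (σ² + 1/t₀²) t²)`.
-/

open ProbabilityTheory Real
open scoped Nat

lemma exp_le_one_add_add_sq_div_two_mul_exp_abs (z : ℝ) :
    exp z ≤ 1 + z + z ^ 2 / 2 * exp |z| := by
  have hseries : HasSum (fun n ↦ z ^ (n + 2) / (n + 2)!) (exp z - (1 + z)) := by
    rw [exp_eq_exp_ℝ]
    simpa [Finset.sum_range_succ] using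
      (hasSum_nat_add_iff' 2).mpr (NormedSpace.expSeries_div_hasSum_exp z)
  have hmajorant : HasSum (fun n ↦ z ^ 2 / 2 * (|z| ^ n / n !)) (z ^ 2 / 2 * exp |z|) := by
    rw [exp_eq_exp_ℝ]
    exact (NormedSpace.expSeries_div_hasSum_exp |z|).mul_left _
  refine sub_le_iff_le_add'.mp (hasSum_le (fun n ↦ ?_) hseries hmajorant)
  have hfact : (2 * n ! : ℝ) ≤ (n + 2)! := by
    exact_mod_cast Nat.le_of_dvd (Nat.factorial_pos _)
      (by simpa [mul_comm] using Nat.factorial_mul_factorial_dvd_factorial_add n 2)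
  calc z ^ (n + 2) / (n + 2)! ≤ |z| ^ (n + 2) / (2 * n !) :=
        div_le_div₀ (by positivity) ((le_abs_self _).trans_eq (abs_pow z _)) (by positivity) hfact
    _ = z ^ 2 / 2 * (|z| ^ n / n !) := by
        rw [pow_add, sq_abs, mul_comm (|z| ^ n)]; field_simp

lemma sq_le_four_div_exp_one_sq_mul_exp {x : ℝ} (hx : 0 ≤ x) :
    x ^ 2 ≤ 4 / exp 1 ^ 2 * exp x := by
  have h := add_one_le_exp (x / 2 - 1)
  have hsq : exp x = exp 1 ^ 2 * exp (x / 2 - 1) ^ 2 := by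
    rw [← exp_nat_mul, ← exp_nat_mul, ← exp_add]; ring_nf
  rw [hsq, ← mul_assoc, div_mul_cancel₀ _ (by positivity)]
  nlinarith

lemma mul_exp_le_exp_exp_one_mul {C p q : ℝ} (hC : 1 ≤ C) (hpq : p ≤ q)
    (hq : (11 / 25) ^ 2 ≤ q) : C * exp p ≤ exp (exp 1 * C * q) := by
  obtain ⟨x, hx, rfl⟩ : ∃ x, 0 ≤ x ∧ exp x = C := ⟨log C, log_nonneg hC, exp_log (by linarith)⟩
  have hexp : 2.7182818283 * (1 + x + x ^ 2 / 2) ≤ exp 1 * exp x :=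
    mul_le_mul exp_one_gt_d9.le (quadratic_le_exp_of_nonneg hx) (by positivity) (exp_pos _).le
  rw [← exp_add, exp_le_exp]
  have hB : 0 ≤ 2.7182818283 * (1 + x + x ^ 2 / 2) := by positivity
  nlinarith [mul_le_mul_of_nonneg_right hexp (hq.trans' (by norm_num) : (0 : ℝ) ≤ q),
    mul_le_mul_of_nonneg_left hq hB, sq_nonneg (x - 9 / 10)]

lemma four_div_exp_one_sq_mul_sq_le {ρ : ℝ} (hρ : 0 < ρ) :
    4 / (exp 1 ^ 2 * (11 / 20 / ρ) ^ 2) ≤ 2 * ρ ^ 2 := by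
  have he : (2.7182818283 : ℝ) ^ 2 ≤ exp 1 ^ 2 := by gcongr; exact exp_one_gt_d9.le
  rw [div_le_iff₀ (by positivity), div_pow, mul_div_assoc', mul_div_assoc',
    le_div_iff₀ (by positivity)]
  nlinarith [sq_nonneg ρ, mul_le_mul_of_nonneg_left he (by positivity : (0 : ℝ) ≤ ρ ^ 2)]

lemma ENNReal.ofReal_lt_iff_mul_toReal_inv_lt_one {T : ℝ≥0∞} (hT : 0 < T) {b : ℝ}
    (hb : 0 ≤ b) : ENNReal.ofReal b < T ↔ b * T⁻¹.toReal < 1 := by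
  rcases eq_or_ne T ⊤ with rfl | hT_top
  · simp
  · rw [ENNReal.toReal_inv, mul_inv_lt_iff₀ (ENNReal.toReal_pos hT.ne' hT_top), one_mul,
      ENNReal.ofReal_lt_iff_lt_toReal hb hT_top]

section

variable {Ω : Type*} [MeasurableSpace Ω] {μ : Measure Ω} {U V X W : Ω → ℝ} {σ τ C : ℝ}

lemma integrable_and_integral_le_of_lintegral_ofReal_le {f : Ω → ℝ}
    (hf : AEStronglyMeasurable f μ) (hf0 : 0 ≤ᵐ[μ] f) {r : ℝ} (hr : 0 ≤ r)
    (h : ∫⁻ ω, ENNReal.ofReal (f ω) ∂μ ≤ ENNReal.ofReal r) :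
    Integrable f μ ∧ ∫ ω, f ω ∂μ ≤ r := by
  refine ⟨⟨hf, (hasFiniteIntegral_iff_ofReal hf0).mpr (h.trans_lt ENNReal.ofReal_lt_top)⟩, ?_⟩
  rw [integral_eq_lintegral_of_nonneg_ae hf0 hf]
  exact ENNReal.toReal_le_of_le_ofReal hr h

lemma integrable_of_integrable_exp_mul_of_nonneg (hV : AEStronglyMeasurable V μ)
    (hV0 : 0 ≤ᵐ[μ] V) {b : ℝ} (hb : 0 < b) (h : Integrable (fun ω ↦ exp (b * V ω)) μ) :
    Integrable V μ := by
  refine (h.const_mul b⁻¹).mono' hV ?_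
  filter_upwards [hV0] with ω hω
  rw [norm_of_nonneg hω, le_inv_mul_iff₀ hb]
  linarith [add_one_le_exp (b * V ω)]

lemma integrable_exp_mul_and_mgf_le_of_abs_le (hX : AEMeasurable X μ)
    (hXW : ∀ᵐ ω ∂μ, |X ω| ≤ W ω) {t : ℝ} (hW : Integrable (fun ω ↦ exp (|t| * W ω)) μ) :
    Integrable (fun ω ↦ exp (t * X ω)) μ ∧ mgf X μ t ≤ mgf W μ |t| := by
  have hle : ∀ᵐ ω ∂μ, exp (t * X ω) ≤ exp (|t| * W ω) := by
    filter_upwards [hXW] with ω hω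
    refine exp_le_exp.mpr ?_
    calc t * X ω ≤ |t| * |X ω| := (le_abs_self _).trans_eq (abs_mul _ _)
      _ ≤ |t| * W ω := by gcongr
  have hint : Integrable (fun ω ↦ exp (t * X ω)) μ := by
    refine hW.mono' (aemeasurable_exp_mul t hX) ?_
    filter_upwards [hle] with ω hω
    rwa [norm_of_nonneg (exp_pos _).le]
  exact ⟨hint, integral_mono_ae hint hW hle⟩

lemma abs_sub_integral_le_add_integral (hU : Integrable U μ) (hV : Integrable V μ)
    (hUV : ∀ᵐ ω ∂μ, |U ω| ≤ V ω) : ∀ᵐ ω ∂μ, |U ω - μ[U]| ≤ V ω + μ[V] := by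
  have hEU : |μ[U]| ≤ μ[V] :=
    abs_integral_le_integral_abs.trans (integral_mono_ae hU.abs hV hUV)
  filter_upwards [hUV] with ω hω using (abs_sub _ _).trans (add_le_add hω hEU)

variable [IsProbabilityMeasure μ]

lemma exp_mul_integral_le_mgf (hV : Integrable V μ) {b : ℝ}
    (h : Integrable (fun ω ↦ exp (b * V ω)) μ) : exp (b * μ[V]) ≤ mgf V μ b := by
  rw [← integral_const_mul]
  exact convexOn_exp.map_integral_le continuousOn_exp isClosed_univ (by simp)
    (hV.const_mul b) h

lemma integrable_exp_mul_add_integral_and_mgf_le_sq (hV : Integrable V μ) {b : ℝ}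
    (h : Integrable (fun ω ↦ exp (b * V ω)) μ) :
    Integrable (fun ω ↦ exp (b * (V ω + μ[V]))) μ ∧
      mgf (fun ω ↦ V ω + μ[V]) μ b ≤ mgf V μ b ^ 2 := by
  refine ⟨by simpa [mul_add, exp_add] using h.mul_const (exp (b * μ[V])), ?_⟩
  rw [mgf_add_const, sq]
  exact mul_le_mul_of_nonneg_left (exp_mul_integral_le_mgf hV h) mgf_nonneg

lemma mgf_le_one_add_of_abs_le (hX : Integrable X μ) (hX0 : μ[X] = 0)
    (hXW : ∀ᵐ ω ∂μ, |X ω| ≤ W ω) {t δ : ℝ} (hδ : 0 < δ)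
    (hW : Integrable (fun ω ↦ exp ((|t| + δ) * W ω)) μ) :
    mgf X μ t ≤ 1 + t ^ 2 / 2 * (4 / (exp 1 ^ 2 * δ ^ 2)) * mgf W μ (|t| + δ) := by
  set K := t ^ 2 / 2 * (4 / (exp 1 ^ 2 * δ ^ 2))
  have hpt : ∀ᵐ ω ∂μ, exp (t * X ω) ≤ 1 + t * X ω + K * exp ((|t| + δ) * W ω) := by
    filter_upwards [hXW] with ω hω
    have hW0 : 0 ≤ W ω := (abs_nonneg _).trans hω
    have hsq : (t * X ω) ^ 2 ≤ t ^ 2 * W ω ^ 2 := by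
      rw [mul_pow]
      exact mul_le_mul_of_nonneg_left (sq_le_sq' (neg_le_of_abs_le hω) (le_of_abs_le hω))
        (sq_nonneg t)
    have hW2 : W ω ^ 2 ≤ 4 / (exp 1 ^ 2 * δ ^ 2) * exp (δ * W ω) := by
      have := sq_le_four_div_exp_one_sq_mul_exp (mul_nonneg hδ.le hW0)
      rw [mul_pow, ← le_div_iff₀' (by positivity)] at this
      exact this.trans_eq (by field_simp)
    calc exp (t * X ω) ≤ 1 + t * X ω + (t * X ω) ^ 2 / 2 * exp |t * X ω| :=
          exp_le_one_add_add_sq_div_two_mul_exp_abs _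
      _ ≤ 1 + t * X ω + t ^ 2 * W ω ^ 2 / 2 * exp (|t| * W ω) := by
          rw [abs_mul]; gcongr
      _ ≤ 1 + t * X ω + t ^ 2 * (4 / (exp 1 ^ 2 * δ ^ 2) * exp (δ * W ω)) / 2
            * exp (|t| * W ω) := by gcongr
      _ = 1 + t * X ω + K * exp ((|t| + δ) * W ω) := by rw [add_mul, exp_add]; ring
  have hbound : Integrable (fun ω ↦ 1 + t * X ω + K * exp ((|t| + δ) * W ω)) μ :=
    ((integrable_const 1).add (hX.const_mul t)).add (hW.const_mul K)
  have hint : Integrable (fun ω ↦ exp (t * X ω)) μ := by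
    refine hbound.mono' (aemeasurable_exp_mul t hX.aemeasurable) ?_
    filter_upwards [hpt] with ω hω
    rwa [norm_of_nonneg (exp_pos _).le]
  calc mgf X μ t ≤ ∫ ω, (1 + t * X ω + K * exp ((|t| + δ) * W ω)) ∂μ :=
        integral_mono_ae hint hbound hpt
    _ = 1 + K * mgf W μ (|t| + δ) := by
        rw [integral_add (f := fun ω ↦ 1 + t * X ω) ((integrable_const 1).add (hX.const_mul t))
            (hW.const_mul K),
          integral_add (integrable_const 1) (hX.const_mul t), integral_const_mul,
          integral_const_mul, hX0, mgf]
        simp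

lemma mgf_le_one_add_of_abs_mul_le (hX : Integrable X μ) (hX0 : μ[X] = 0)
    (hXW : ∀ᵐ ω ∂μ, |X ω| ≤ W ω) (hσ : 0 ≤ σ) (hC : 0 ≤ C)
    (hW : ∀ b, 0 ≤ b → b * τ < 1 →
      Integrable (fun ω ↦ exp (b * W ω)) μ ∧ mgf W μ b ≤ C * exp (σ ^ 2 * b ^ 2))
    {ρ : ℝ} (hρ : 0 < ρ) (hσρ : σ ≤ ρ) (hτρ : τ ≤ ρ) {t : ℝ} (ht : |t| * ρ ≤ 11 / 25) :
    mgf X μ t ≤ 1 + exp 1 * C * ρ ^ 2 * t ^ 2 := by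
  set δ := 11 / 20 / ρ
  have hδρ : δ * ρ = 11 / 20 := div_mul_cancel₀ _ hρ.ne'
  have ha : 0 ≤ |t| + δ := by positivity
  have haρ : (|t| + δ) * ρ < 1 := by linarith [add_mul |t| δ ρ]
  obtain ⟨hWa, hmgfWa⟩ := hW (|t| + δ) ha ((mul_le_mul_of_nonneg_left hτρ ha).trans_lt haρ)
  have hσa : σ ^ 2 * (|t| + δ) ^ 2 ≤ 1 := by
    rw [← mul_pow]
    exact pow_le_one₀ (by positivity) (by nlinarith [mul_le_mul_of_nonneg_left hσρ ha])
  calc mgf X μ t ≤ 1 + t ^ 2 / 2 * (4 / (exp 1 ^ 2 * δ ^ 2)) * mgf W μ (|t| + δ) :=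
        mgf_le_one_add_of_abs_le hX hX0 hXW (by positivity) hWa
    _ ≤ 1 + t ^ 2 / 2 * (2 * ρ ^ 2) * (C * exp 1) := by
        gcongr
        · exact mgf_nonneg
        · exact four_div_exp_one_sq_mul_sq_le hρ
        · exact hmgfWa.trans (by gcongr)
    _ = 1 + exp 1 * C * ρ ^ 2 * t ^ 2 := by ring

theorem mgf_le_exp_of_abs_le (hX : Integrable X μ) (hX0 : μ[X] = 0)
    (hXW : ∀ᵐ ω ∂μ, |X ω| ≤ W ω) (hσ : 0 < σ) (hC : 1 ≤ C)
    (hW : ∀ b, 0 ≤ b → b * τ < 1 →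
      Integrable (fun ω ↦ exp (b * W ω)) μ ∧ mgf W μ b ≤ C * exp (σ ^ 2 * b ^ 2))
    {t : ℝ} (ht : |t| * τ < 1) :
    Integrable (fun ω ↦ exp (t * X ω)) μ ∧
      mgf X μ t ≤ exp (exp 1 * C * (σ ^ 2 + τ ^ 2) * t ^ 2) := by
  obtain ⟨hWt, hmgfWt⟩ := hW |t| (abs_nonneg t) ht
  obtain ⟨hint, hle⟩ := integrable_exp_mul_and_mgf_le_of_abs_le hX.aemeasurable hXW hWt
  refine ⟨hint, ?_⟩
  have hρ2 : max σ τ ^ 2 ≤ σ ^ 2 + τ ^ 2 := by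
    rcases max_choice σ τ with h | h <;> rw [h] <;> nlinarith
  -- `11/20` (the value of `δ ρ` in the small regime) needs `2 (20/11)² ≤ e²`; any threshold `k`
  -- with `k + 11/20 < 1` and `k² (e (1 + x + x²/2) - 1) ≥ x` for all `x ≥ 0` could replace `11/25`.
  rcases le_or_gt (|t| * max σ τ) (11 / 25) with hsmall | hlarge
  · calc mgf X μ t ≤ 1 + exp 1 * C * max σ τ ^ 2 * t ^ 2 :=
          mgf_le_one_add_of_abs_mul_le hX hX0 hXW hσ.le (by linarith) hW
            (lt_max_of_lt_left hσ) (le_max_left σ τ) (le_max_right σ τ) hsmall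
      _ ≤ 1 + exp 1 * C * (σ ^ 2 + τ ^ 2) * t ^ 2 := by gcongr
      _ ≤ exp (exp 1 * C * (σ ^ 2 + τ ^ 2) * t ^ 2) := by
          linarith [add_one_le_exp (exp 1 * C * (σ ^ 2 + τ ^ 2) * t ^ 2)]
  · rw [← sq_abs t, mul_assoc (exp 1 * C)]
    refine hle.trans (hmgfWt.trans (mul_exp_le_exp_exp_one_mul hC ?_ ?_)) <;>
      nlinarith [sq_nonneg τ, sq_nonneg |t|]

end

/-- **Moment generating function control.**
If `|U| ≤ V` almost surely and `E[exp(tV)] ≤ c·exp(σ²t²/2)` for `0 ≤ t < t₀` (with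
`c ≥ 1`), then `E[exp(t(U − E[U]))] ≤ exp(e·c²·(σ² + 1/t₀²)·t²)` for all `|t| < t₀`.
(The convention `1/t₀² = 0` for `t₀ = ∞` is realized via `t₀⁻¹.toReal`.) -/
theorem mgf_control
    {Ω : Type*} [MeasurableSpace Ω] (μ : Measure Ω) [IsProbabilityMeasure μ]
    (U V : Ω → ℝ) (hU : Measurable U) (hV : Measurable V)
    (hUV : ∀ᵐ ω ∂μ, |U ω| ≤ V ω)
    (σ : ℝ) (hσ : 0 < σ) (t₀ : ℝ≥0∞) (ht₀ : 0 < t₀) (c : ℝ) (hc : 1 ≤ c)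
    (hmgfV : ∀ t : ℝ, 0 ≤ t → ENNReal.ofReal t < t₀ →
      ∫⁻ ω, ENNReal.ofReal (Real.exp (t * V ω)) ∂μ
        ≤ ENNReal.ofReal (c * Real.exp (σ ^ 2 * t ^ 2 / 2))) :
    ∀ t : ℝ, ENNReal.ofReal |t| < t₀ →
      ∫⁻ ω, ENNReal.ofReal (Real.exp (t * (U ω - ∫ ω', U ω' ∂μ))) ∂μ
        ≤ ENNReal.ofReal
            (Real.exp (Real.exp 1 * c ^ 2 * (σ ^ 2 + t₀⁻¹.toReal ^ 2) * t ^ 2)) := by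
  intro t ht
  set τ := t₀⁻¹.toReal
  have hmgfV' : ∀ b, 0 ≤ b → b * τ < 1 →
      Integrable (fun ω ↦ exp (b * V ω)) μ ∧ mgf V μ b ≤ c * exp (σ ^ 2 * b ^ 2 / 2) :=
    fun b hb hbτ ↦ integrable_and_integral_le_of_lintegral_ofReal_le
      (aemeasurable_exp_mul b hV.aemeasurable) (ae_of_all _ fun _ ↦ (exp_pos _).le)
      (by positivity) (hmgfV b hb ((ENNReal.ofReal_lt_iff_mul_toReal_inv_lt_one ht₀ hb).mpr hbτ))
  have hVint : Integrable V μ := by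
    have hτ : 0 ≤ τ := ENNReal.toReal_nonneg
    refine integrable_of_integrable_exp_mul_of_nonneg hV.aestronglyMeasurable
      (hUV.mono fun ω h ↦ (abs_nonneg _).trans h) (b := (τ + 1)⁻¹) (by positivity)
      (hmgfV' _ (by positivity) ?_).1
    rw [inv_mul_lt_one₀ (by positivity)]; linarith
  have hUint : Integrable U μ := hVint.mono' hU.aestronglyMeasurable (by simpa using hUV)
  have hW : ∀ b, 0 ≤ b → b * τ < 1 →
      Integrable (fun ω ↦ exp (b * (V ω + μ[V]))) μ ∧
        mgf (fun ω ↦ V ω + μ[V]) μ b ≤ c ^ 2 * exp (σ ^ 2 * b ^ 2) := by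
    intro b hb hbτ
    obtain ⟨hint, hmgf⟩ := hmgfV' b hb hbτ
    refine (integrable_exp_mul_add_integral_and_mgf_le_sq hVint hint).imp_right (·.trans ?_)
    calc mgf V μ b ^ 2 ≤ (c * exp (σ ^ 2 * b ^ 2 / 2)) ^ 2 := pow_le_pow_left₀ mgf_nonneg hmgf 2
      _ = c ^ 2 * exp (σ ^ 2 * b ^ 2) := by rw [mul_pow, ← exp_nat_mul]; ring_nf
  obtain ⟨hint, hmgf⟩ := mgf_le_exp_of_abs_le (X := fun ω ↦ U ω - μ[U])
    (hUint.sub (integrable_const _)) (by simp [integral_sub hUint (integrable_const _)])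
    (abs_sub_integral_le_add_integral hUint hVint hUV) hσ (one_le_pow₀ hc) hW
    ((ENNReal.ofReal_lt_iff_mul_toReal_inv_lt_one ht₀ (abs_nonneg t)).mp ht)
  rw [← ofReal_integral_eq_lintegral_ofReal hint (ae_of_all _ fun _ ↦ (exp_pos _).le)]
  exact ENNReal.ofReal_le_ofReal hmgf
end

section
/- Classical irrepresentable condition implies the GLBI irrepresentable condition in sparse linear regression: Consider the loss ℓ(β) = ‖y − Xβ‖₂²/(2n) with no intercept, and assume λ·I ⪯ X_Sᵀ X_S ⪯ Λ·I for some λ, Λ > 0 and λ' := λ(1 − κδΛ/2) > 0. Then for every K ≥ 1 the oracle iteration satisfies ‖z'_{K,S}‖_∞ ≤ 1 + (√(Λ/λ) + 1)‖βᵒ_S‖₂/κ. Consequently, if ‖X_{S^c}ᵀ X_S (X_Sᵀ X_S)⁻¹‖_∞ ≤ 1 − η for some η ∈ (0,1) and κ is large enough that 1 + (√(Λ/λ) + 1)‖βᵒ_S‖₂/κ < (1 − η/2)/(1 − η), then sup_{K≥1} ‖X_{S^c}ᵀ X_S (X_Sᵀ X_S)⁻¹ z'_{K,S}‖_∞ <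 1 − η/2. -/
open scoped BigOperators

/-!
The oracle iteration is a linearised Bregman iteration on the `S`-supported vectors. Soft
thresholding is `id` minus the projection onto `[-1, 1]`, hence firmly nonexpansive, so each step
satisfies `⟨∇ℓ(β'ₖ), β'ₖ₊₁ - β'ₖ⟩ ≤ -‖β'ₖ₊₁ - β'ₖ‖² / (κδ)`; together with `‖XΔ‖² ≤ Λ‖Δ‖²` and
`κδΛ < 2` this makes `ℓ(β'ₖ)` nonincreasing, so `ℓ(β'_K) ≤ ℓ(0)`. Since `βᵒ` minimises `ℓ` on the
`S`-supported vectors, `ℓ(βᵒ + d) = ℓ(βᵒ) + ‖Xd‖² / (2n)` for such `d`; hence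
`λ‖β'_K - βᵒ‖² ≤ ‖X(β'_K - βᵒ)‖² ≤ ‖Xβᵒ‖² ≤ Λ‖βᵒ‖²`. Finally `|z| ≤ 1 + |𝒮(z, 1)|` and
`𝒮(z'_K, 1) = β'_K / κ`; the second claim bounds each entry of `X_{Sᶜ}ᵀX_S(X_SᵀX_S)⁻¹ z'_{K,S}`
by the `ℓ¹` norm of its row times `‖z'_{K,S}‖_∞`.
-/

open Matrix

noncomputable def unitClamp (x : ℝ) : ℝ := max (min x 1) (-1)

lemma unitClamp_mem_Icc (x : ℝ) : unitClamp x ∈ Set.Icc (-1) 1 :=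
  ⟨le_max_right _ _, max_le (min_le_right _ _) (by norm_num)⟩

lemma soft_eq_sub_unitClamp (x : ℝ) : soft x = x - unitClamp x := by
  unfold soft unitClamp
  rcases lt_trichotomy x 0 with h | rfl | h
  · rw [Real.sign_of_neg h, abs_of_neg h]
    rcases le_total x (-1) with h1 | h1
    · rw [max_eq_left (by linarith : (0:ℝ) ≤ -x - 1), min_eq_left (by linarith), max_eq_right h1]
      ring
    · rw [max_eq_right (by linarith : -x - 1 ≤ 0), min_eq_left (by linarith), max_eq_left h1]
      ring
  · norm_num
  · rw [Real.sign_of_pos h, abs_of_pos h]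
    rcases le_total x 1 with h1 | h1
    · rw [max_eq_right (by linarith : x - 1 ≤ 0), min_eq_left h1, max_eq_left (by linarith)]
      ring
    · rw [max_eq_left (by linarith : (0:ℝ) ≤ x - 1), min_eq_right h1, max_eq_left (by norm_num)]
      ring

lemma sub_unitClamp_mul_sub_unitClamp_nonpos (x : ℝ) {w : ℝ} (hw : w ∈ Set.Icc (-1) 1) :
    (x - unitClamp x) * (w - unitClamp x) ≤ 0 := by
  obtain ⟨hw₁, hw₂⟩ := hw
  unfold unitClamp
  rcases le_total x (-1) with h | h
  · rw [min_eq_left (by linarith), max_eq_right h]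
    nlinarith
  rcases le_total x 1 with h' | h'
  · rw [min_eq_left h', max_eq_left h]
    simp
  · rw [min_eq_right h', max_eq_left (by norm_num)]
    nlinarith

/-- Firm nonexpansiveness, inherited from the projection `unitClamp` onto `[-1, 1]`. -/
lemma sq_soft_sub_soft_le (a b : ℝ) : (soft a - soft b) ^ 2 ≤ (soft a - soft b) * (a - b) := by
  have ha := sub_unitClamp_mul_sub_unitClamp_nonpos a (unitClamp_mem_Icc b)
  have hb := sub_unitClamp_mul_sub_unitClamp_nonpos b (unitClamp_mem_Icc a)
  rw [soft_eq_sub_unitClamp, soft_eq_sub_unitClamp]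
  nlinarith

lemma abs_le_one_add_abs_soft (x : ℝ) : |x| ≤ 1 + |soft x| := by
  have h := unitClamp_mem_Icc x
  rw [soft_eq_sub_unitClamp]
  calc |x| = |unitClamp x + (x - unitClamp x)| := by ring_nf
    _ ≤ |unitClamp x| + |x - unitClamp x| := abs_add_le _ _
    _ ≤ 1 + |x - unitClamp x| := by gcongr; exact abs_le.2 h

lemma mul_soft_step_le {κ δ : ℝ} (hκ : 0 < κ) (hδ : 0 < δ) (z g : ℝ) :
    g * (κ * soft (z - δ * g) - κ * soft z) ≤
      -(κ * soft (z - δ * g) - κ * soft z) ^ 2 / (κ * δ) := by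
  have hfirm := sq_soft_sub_soft_le (z - δ * g) z
  rw [le_div_iff₀ (by positivity)]
  nlinarith [mul_le_mul_of_nonneg_left hfirm (mul_pos hκ hκ).le]

section LeastSquares

variable {m ι : Type*} [Fintype m] [Fintype ι]

lemma dotProduct_self_nonneg (v : ι → ℝ) : 0 ≤ v ⬝ᵥ v :=
  Fintype.sum_nonneg fun j => mul_self_nonneg (v j)

lemma sq_le_dotProduct_self (v : ι → ℝ) (j : ι) : v j ^ 2 ≤ v ⬝ᵥ v := by
  rw [sq]
  exact Finset.single_le_sum (f := fun i => v i * v i) (fun i _ => mul_self_nonneg (v i))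
    (Finset.mem_univ j)

noncomputable def lsLoss (X : Matrix m ι ℝ) (y : m → ℝ) (β : ι → ℝ) : ℝ :=
  (y - X *ᵥ β) ⬝ᵥ (y - X *ᵥ β) / (2 * Fintype.card m)

noncomputable def lsGrad (X : Matrix m ι ℝ) (y : m → ℝ) (β : ι → ℝ) : ι → ℝ :=
  (Fintype.card m : ℝ)⁻¹ • ((X *ᵥ β - y) ᵥ* X)

variable (X : Matrix m ι ℝ) (y : m → ℝ)

lemma lsLoss_add (β v : ι → ℝ) :
    lsLoss X y (β + v) =
      lsLoss X y β + lsGrad X y β ⬝ᵥ v + (X *ᵥ v) ⬝ᵥ (X *ᵥ v) / (2 * Fintype.card m) := by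
  have hres : y - X *ᵥ (β + v) = (y - X *ᵥ β) - X *ᵥ v := by rw [mulVec_add]; abel
  have hgrad : lsGrad X y β ⬝ᵥ v = -(Fintype.card m : ℝ)⁻¹ * ((y - X *ᵥ β) ⬝ᵥ (X *ᵥ v)) := by
    rw [lsGrad, smul_dotProduct, ← dotProduct_mulVec, ← neg_sub, neg_dotProduct, smul_eq_mul]
    ring
  rw [lsLoss, lsLoss, hres, hgrad]
  simp only [sub_dotProduct, dotProduct_sub]
  rw [dotProduct_comm (X *ᵥ v) y, dotProduct_comm (X *ᵥ v) (X *ᵥ β)]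
  ring

lemma differentiable_lsLoss : Differentiable ℝ (lsLoss X y) := by
  unfold lsLoss
  simp only [dotProduct, mulVec, Pi.sub_apply]
  fun_prop

lemma lsLoss_add_smul (β v : ι → ℝ) (t : ℝ) :
    lsLoss X y (β + t • v) = lsLoss X y β + t * (lsGrad X y β ⬝ᵥ v) +
      t ^ 2 * ((X *ᵥ v) ⬝ᵥ (X *ᵥ v) / (2 * Fintype.card m)) := by
  rw [lsLoss_add, mulVec_smul, dotProduct_smul, smul_dotProduct, dotProduct_smul]
  simp only [smul_eq_mul]
  ring

lemma fderiv_lsLoss_apply (β v : ι → ℝ) :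
    fderiv ℝ (lsLoss X y) β v = lsGrad X y β ⬝ᵥ v := by
  rw [← (differentiable_lsLoss X y β).lineDeriv_eq_fderiv]
  refine HasLineDerivAt.lineDeriv ?_
  unfold HasLineDerivAt
  simp only [lsLoss_add_smul]
  exact ((((hasDerivAt_id' (0 : ℝ)).mul_const _).const_add _).add
    ((hasDerivAt_pow 2 (0 : ℝ)).mul_const _)).congr_deriv (by simp)

variable {S : Finset ι} {βo : ι → ℝ}

lemma lsGrad_dotProduct_eq_zero_of_isMin (hβo : ∀ j ∉ S, βo j = 0)
    (hmin : ∀ β : ι → ℝ, (∀ j ∉ S, β j = 0) → lsLoss X y βo ≤ lsLoss X y β)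
    {d : ι → ℝ} (hd : ∀ j ∉ S, d j = 0) : lsGrad X y βo ⬝ᵥ d = 0 := by
  have hquad : ∀ t : ℝ, 0 ≤ (X *ᵥ d) ⬝ᵥ (X *ᵥ d) / (2 * Fintype.card m) * (t * t) +
      lsGrad X y βo ⬝ᵥ d * t + 0 := fun t => by
    have := hmin (βo + t • d) fun j hj => by simp [hβo j hj, hd j hj]
    rw [lsLoss_add_smul] at this
    linarith
  have := discrim_le_zero hquad
  rw [discrim] at this
  nlinarith

lemma lsLoss_add_of_isMin (hβo : ∀ j ∉ S, βo j = 0)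
    (hmin : ∀ β : ι → ℝ, (∀ j ∉ S, β j = 0) → lsLoss X y βo ≤ lsLoss X y β)
    {d : ι → ℝ} (hd : ∀ j ∉ S, d j = 0) :
    lsLoss X y (βo + d) = lsLoss X y βo + (X *ᵥ d) ⬝ᵥ (X *ᵥ d) / (2 * Fintype.card m) := by
  rw [lsLoss_add, lsGrad_dotProduct_eq_zero_of_isMin X y hβo hmin hd, add_zero]

lemma mulVec_sub_dotProduct_le_of_lsLoss_le [Nonempty m] (hβo : ∀ j ∉ S, βo j = 0)
    (hmin : ∀ β : ι → ℝ, (∀ j ∉ S, β j = 0) → lsLoss X y βo ≤ lsLoss X y β)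
    {β : ι → ℝ} (hβ : ∀ j ∉ S, β j = 0) (hle : lsLoss X y β ≤ lsLoss X y 0) :
    (X *ᵥ (β - βo)) ⬝ᵥ (X *ᵥ (β - βo)) ≤ (X *ᵥ βo) ⬝ᵥ (X *ᵥ βo) := by
  have hβ' := lsLoss_add_of_isMin X y hβo hmin (d := β - βo) fun j hj => by simp [hβ j hj, hβo j hj]
  have h0 := lsLoss_add_of_isMin X y hβo hmin (d := -βo) fun j hj => by simp [hβo j hj]
  rw [add_sub_cancel] at hβ'
  rw [add_neg_cancel, mulVec_neg, neg_dotProduct_neg] at h0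
  have hn : (0 : ℝ) < 2 * Fintype.card m := by positivity
  rw [← div_le_div_iff_of_pos_right hn]
  linarith

lemma lsLoss_le_of_step [Nonempty m] {κ δ Lam : ℝ} (hκ : 0 < κ) (hδ : 0 < δ)
    (hstep : κ * δ * Lam ≤ 2 * Fintype.card m)
    (hupper : ∀ v : ι → ℝ, (∀ j ∉ S, v j = 0) → (X *ᵥ v) ⬝ᵥ (X *ᵥ v) ≤ Lam * (v ⬝ᵥ v))
    {β β₁ z z₁ : ι → ℝ} (hβ : ∀ j ∉ S, β j = 0) (hβ₁ : ∀ j ∉ S, β₁ j = 0)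
    (hβS : ∀ j ∈ S, β j = κ * soft (z j)) (hβ₁S : ∀ j ∈ S, β₁ j = κ * soft (z₁ j))
    (hz₁ : ∀ j ∈ S, z₁ j = z j - δ * lsGrad X y β j) :
    lsLoss X y β₁ ≤ lsLoss X y β := by
  set Δ := β₁ - β
  have hΔ : ∀ j ∉ S, Δ j = 0 := fun j hj => by simp [Δ, hβ j hj, hβ₁ j hj]
  have hlin : lsGrad X y β ⬝ᵥ Δ ≤ -((Δ ⬝ᵥ Δ) / (κ * δ)) := by
    calc lsGrad X y β ⬝ᵥ Δ = ∑ j, lsGrad X y β j * Δ j := rfl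
      _ ≤ ∑ j, -Δ j ^ 2 / (κ * δ) := Finset.sum_le_sum fun j _ => by
          by_cases hj : j ∈ S
          · simp only [Δ, Pi.sub_apply, hβS j hj, hβ₁S j hj, hz₁ j hj]
            exact mul_soft_step_le hκ hδ _ _
          · simp [hΔ j hj]
      _ = -((Δ ⬝ᵥ Δ) / (κ * δ)) := by
          simp only [dotProduct, neg_div, Finset.sum_neg_distrib, Finset.sum_div, sq]
  have hquad : (X *ᵥ Δ) ⬝ᵥ (X *ᵥ Δ) / (2 * Fintype.card m) ≤ (Δ ⬝ᵥ Δ) / (κ * δ) := by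
    have hn : (0 : ℝ) < 2 * Fintype.card m := by positivity
    rw [div_le_div_iff₀ hn (by positivity)]
    calc (X *ᵥ Δ) ⬝ᵥ (X *ᵥ Δ) * (κ * δ) ≤ Lam * (Δ ⬝ᵥ Δ) * (κ * δ) := by
          gcongr
          exact hupper Δ hΔ
      _ = κ * δ * Lam * (Δ ⬝ᵥ Δ) := by ring
      _ ≤ 2 * Fintype.card m * (Δ ⬝ᵥ Δ) := by
          gcongr
          exact dotProduct_self_nonneg Δ
      _ = (Δ ⬝ᵥ Δ) * (2 * Fintype.card m) := by ring
  have hexp := lsLoss_add X y β Δ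
  rw [add_sub_cancel] at hexp
  rw [hexp]
  linarith

lemma nonempty_of_lower_bound {lam : ℝ} (hlam : 0 < lam)
    (hlower : ∀ v : ι → ℝ, (∀ j ∉ S, v j = 0) → lam * (v ⬝ᵥ v) ≤ (X *ᵥ v) ⬝ᵥ (X *ᵥ v))
    {j : ι} (hj : j ∈ S) : Nonempty m := by
  classical
  by_contra hm
  rw [not_nonempty_iff] at hm
  have := hlower (Pi.single j 1) fun i hi => Pi.single_eq_of_ne (ne_of_mem_of_not_mem hj hi).symm _
  rw [dotProduct_single] at this
  simp [dotProduct] at this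
  linarith

lemma abs_le_of_lsLoss_le_lsLoss_zero [Nonempty m] {lam Lam : ℝ} (hlam : 0 < lam)
    (hlower : ∀ v : ι → ℝ, (∀ j ∉ S, v j = 0) → lam * (v ⬝ᵥ v) ≤ (X *ᵥ v) ⬝ᵥ (X *ᵥ v))
    (hupper : ∀ v : ι → ℝ, (∀ j ∉ S, v j = 0) → (X *ᵥ v) ⬝ᵥ (X *ᵥ v) ≤ Lam * (v ⬝ᵥ v))
    (hβo : ∀ j ∉ S, βo j = 0)
    (hmin : ∀ β : ι → ℝ, (∀ j ∉ S, β j = 0) → lsLoss X y βo ≤ lsLoss X y β)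
    {β : ι → ℝ} (hβ : ∀ j ∉ S, β j = 0) (hle : lsLoss X y β ≤ lsLoss X y 0) (j : ι) :
    |β j| ≤ (√(Lam / lam) + 1) * √(βo ⬝ᵥ βo) := by
  have hd : ∀ j ∉ S, (β - βo) j = 0 := fun j hj => by simp [hβ j hj, hβo j hj]
  have hdd : (β - βo) ⬝ᵥ (β - βo) ≤ Lam / lam * (βo ⬝ᵥ βo) := by
    rw [div_mul_eq_mul_div, le_div_iff₀ hlam, mul_comm]
    calc lam * ((β - βo) ⬝ᵥ (β - βo)) ≤ (X *ᵥ (β - βo)) ⬝ᵥ (X *ᵥ (β - βo)) := hlower _ hd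
      _ ≤ (X *ᵥ βo) ⬝ᵥ (X *ᵥ βo) := mulVec_sub_dotProduct_le_of_lsLoss_le X y hβo hmin hβ hle
      _ ≤ Lam * (βo ⬝ᵥ βo) := hupper _ hβo
  have hdj : |β j - βo j| ≤ √(Lam / lam) * √(βo ⬝ᵥ βo) := by
    rw [← Real.sqrt_mul' _ (dotProduct_self_nonneg βo)]
    exact Real.abs_le_sqrt ((sq_le_dotProduct_self (β - βo) j).trans hdd)
  have hoj : |βo j| ≤ √(βo ⬝ᵥ βo) := Real.abs_le_sqrt (sq_le_dotProduct_self βo j)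
  calc |β j| = |(β j - βo j) + βo j| := by ring_nf
    _ ≤ |β j - βo j| + |βo j| := abs_add_le _ _
    _ ≤ √(Lam / lam) * √(βo ⬝ᵥ βo) + √(βo ⬝ᵥ βo) := add_le_add hdj hoj
    _ = (√(Lam / lam) + 1) * √(βo ⬝ᵥ βo) := by ring

end LeastSquares

structure IsOracleRun {m ι : Type*} [Fintype m] [Fintype ι] (X : Matrix m ι ℝ) (y : m → ℝ)
    (S : Finset ι) (κ δ : ℝ) (β z : ℕ → ι → ℝ) : Prop where
  beta_zero : β 0 = 0
  beta_supp : ∀ k, ∀ j ∉ S, β k j = 0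
  beta_eq_soft : ∀ k, ∀ j ∈ S, β k j = κ * soft (z k j)
  z_succ : ∀ k, ∀ j ∈ S, z (k + 1) j = z k j - δ * lsGrad X y (β k) j

namespace IsOracleRun

variable {m ι : Type*} [Fintype m] [Fintype ι] {X : Matrix m ι ℝ} {y : m → ℝ} {S : Finset ι}
  {κ δ : ℝ} {β z : ℕ → ι → ℝ}

lemma lsLoss_le_lsLoss_zero [Nonempty m] (h : IsOracleRun X y S κ δ β z) {Lam : ℝ}
    (hκ : 0 < κ) (hδ : 0 < δ) (hstep : κ * δ * Lam ≤ 2 * Fintype.card m)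
    (hupper : ∀ v : ι → ℝ, (∀ j ∉ S, v j = 0) → (X *ᵥ v) ⬝ᵥ (X *ᵥ v) ≤ Lam * (v ⬝ᵥ v))
    (k : ℕ) : lsLoss X y (β k) ≤ lsLoss X y 0 := by
  induction k with
  | zero => rw [h.beta_zero]
  | succ k ih =>
    exact (lsLoss_le_of_step X y hκ hδ hstep hupper (h.beta_supp k) (h.beta_supp (k + 1))
      (h.beta_eq_soft k) (h.beta_eq_soft (k + 1)) (h.z_succ k)).trans ih

lemma abs_z_le [Nonempty m] (h : IsOracleRun X y S κ δ β z) {βo : ι → ℝ} {lam Lam : ℝ}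
    (hκ : 0 < κ) (hδ : 0 < δ) (hlam : 0 < lam) (hstep : κ * δ * Lam ≤ 2 * Fintype.card m)
    (hlower : ∀ v : ι → ℝ, (∀ j ∉ S, v j = 0) → lam * (v ⬝ᵥ v) ≤ (X *ᵥ v) ⬝ᵥ (X *ᵥ v))
    (hupper : ∀ v : ι → ℝ, (∀ j ∉ S, v j = 0) → (X *ᵥ v) ⬝ᵥ (X *ᵥ v) ≤ Lam * (v ⬝ᵥ v))
    (hβo : ∀ j ∉ S, βo j = 0)
    (hmin : ∀ β : ι → ℝ, (∀ j ∉ S, β j = 0) → lsLoss X y βo ≤ lsLoss X y β)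
    (k : ℕ) {j : ι} (hj : j ∈ S) :
    |z k j| ≤ 1 + (√(Lam / lam) + 1) * √(βo ⬝ᵥ βo) / κ := by
  calc |z k j| ≤ 1 + |soft (z k j)| := abs_le_one_add_abs_soft _
    _ = 1 + |β k j| / κ := by
        rw [h.beta_eq_soft k j hj, abs_mul, abs_of_pos hκ, mul_div_cancel_left₀ _ hκ.ne']
    _ ≤ 1 + (√(Lam / lam) + 1) * √(βo ⬝ᵥ βo) / κ := by
        gcongr
        exact abs_le_of_lsLoss_le_lsLoss_zero X y hlam hlower hupper hβo hmin (h.beta_supp k)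
          (h.lsLoss_le_lsLoss_zero hκ hδ hstep hupper k) j

end IsOracleRun

lemma abs_sum_mul_le_sum_abs_mul {α : Type*} (s : Finset α) (a z : α → ℝ) {M : ℝ}
    (hz : ∀ l ∈ s, |z l| ≤ M) : |∑ l ∈ s, a l * z l| ≤ (∑ l ∈ s, |a l|) * M := by
  rw [Finset.sum_mul]
  refine (Finset.abs_sum_le_sum_abs _ _).trans (Finset.sum_le_sum fun l hl => ?_)
  rw [abs_mul]
  exact mul_le_mul_of_nonneg_left (hz l hl) (abs_nonneg _)

theorem linear_classical_irr_implies_glbi_irr_general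
    {n p : ℕ} (X : Fin n → Fin p → ℝ) (y : Fin n → ℝ) (S : Finset (Fin p))
    (ℓ : (Fin p → ℝ) → ℝ)
    (hℓ : ℓ = fun β => (∑ i, (y i - ∑ j, X i j * β j) ^ 2) / (2 * n))
    (βo : Fin p → ℝ) (hβo_supp : ∀ j, j ∉ S → βo j = 0)
    (hβo_min : ∀ β : Fin p → ℝ, (∀ j, j ∉ S → β j = 0) → ℓ βo ≤ ℓ β)
    (κ δ : ℝ) (hκ : 0 < κ) (hδ : 0 < δ)
    (lam Lam : ℝ) (hlam : 0 < lam)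
    (hlower : ∀ v : Fin p → ℝ, (∀ j, j ∉ S → v j = 0) →
      lam * ∑ j, v j ^ 2 ≤ ∑ i, (∑ j, X i j * v j) ^ 2)
    (hupper : ∀ v : Fin p → ℝ, (∀ j, j ∉ S → v j = 0) →
      ∑ i, (∑ j, X i j * v j) ^ 2 ≤ Lam * ∑ j, v j ^ 2)
    (hlam' : 0 < lam * (1 - κ * δ * Lam / 2))
    (β' z' : ℕ → Fin p → ℝ)
    (hz'0 : ∀ j, z' 0 j = 0) (hβ'0 : ∀ j, β' 0 j = 0)
    (hsupp : ∀ k j, j ∉ S → z' k j = 0 ∧ β' k j = 0)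
    (hz'step : ∀ k, ∀ j ∈ S,
      z' (k + 1) j = z' k j - δ * fderiv ℝ ℓ (β' k) (Pi.single j 1))
    (hβ'step : ∀ k, ∀ j ∈ S, β' (k + 1) j = κ * soft (z' (k + 1) j)) :
    (∀ K : ℕ, 1 ≤ K → ∀ j ∈ S,
        |z' K j| ≤ 1 + (Real.sqrt (Lam / lam) + 1) *
            Real.sqrt (∑ j ∈ S, βo j ^ 2) / κ) ∧
      ∀ η : ℝ, 0 < η → η < 1 →
        (∀ jc : {j : Fin p // j ∉ S},
          ∑ l : {j : Fin p // j ∈ S},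
            |((Matrix.of fun (a : {j : Fin p // j ∉ S}) (b : {j : Fin p // j ∈ S}) =>
                  ∑ i, X i a.1 * X i b.1) *
                (Matrix.of fun (a b : {j : Fin p // j ∈ S}) =>
                  ∑ i, X i a.1 * X i b.1)⁻¹) jc l| ≤ 1 - η) →
        1 + (Real.sqrt (Lam / lam) + 1) * Real.sqrt (∑ j ∈ S, βo j ^ 2) / κ
            < (1 - η / 2) / (1 - η) →
        ∃ b, b < 1 - η / 2 ∧ ∀ K : ℕ, 1 ≤ K → ∀ jc : {j : Fin p // j ∉ S},
          |∑ l : {j : Fin p // j ∈ S},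
              ((Matrix.of fun (a : {j : Fin p // j ∉ S}) (b : {j : Fin p // j ∈ S}) =>
                    ∑ i, X i a.1 * X i b.1) *
                  (Matrix.of fun (a b : {j : Fin p // j ∈ S}) =>
                    ∑ i, X i a.1 * X i b.1)⁻¹) jc l * z' K l.1| ≤ b := by
  have hloss : ℓ = lsLoss (Matrix.of X) y := by
    subst hℓ
    funext β
    simp [lsLoss, dotProduct, mulVec, sq]
  subst hloss
  have hlower' : ∀ v : Fin p → ℝ, (∀ j ∉ S, v j = 0) →
      lam * (v ⬝ᵥ v) ≤ (of X *ᵥ v) ⬝ᵥ (of X *ᵥ v) :=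
    fun v hv => by simpa [dotProduct, mulVec, sq] using hlower v hv
  have hupper' : ∀ v : Fin p → ℝ, (∀ j ∉ S, v j = 0) →
      (of X *ᵥ v) ⬝ᵥ (of X *ᵥ v) ≤ Lam * (v ⬝ᵥ v) :=
    fun v hv => by simpa [dotProduct, mulVec, sq] using hupper v hv
  have hrun : IsOracleRun (of X) y S κ δ β' z' :=
    { beta_zero := funext hβ'0
      beta_supp := fun k j hj => (hsupp k j hj).2
      beta_eq_soft := fun
        | 0, j, _ => by simp [hβ'0, hz'0, soft]
        | k + 1, j, hj => hβ'step k j hj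
      z_succ := fun k j hj => by
        rw [hz'step k j hj, fderiv_lsLoss_apply, dotProduct_single, mul_one] }
  have hnorm : ∑ j ∈ S, βo j ^ 2 = βo ⬝ᵥ βo := by
    rw [Finset.sum_subset (Finset.subset_univ S) fun j _ hj => by simp [hβo_supp j hj]]
    simp [dotProduct, sq]
  have hz : ∀ K, ∀ j ∈ S, |z' K j| ≤ 1 + (√(Lam / lam) + 1) * √(∑ j ∈ S, βo j ^ 2) / κ := by
    intro K j hj
    have := nonempty_of_lower_bound (of X) hlam hlower' hj
    have hn : (1 : ℝ) ≤ Fintype.card (Fin n) := by exact_mod_cast Fintype.card_pos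
    have hstep : κ * δ * Lam ≤ 2 * Fintype.card (Fin n) := by nlinarith
    rw [hnorm]
    exact hrun.abs_z_le hκ hδ hlam hstep hlower' hupper' hβo_supp hβo_min K hj
  set B := 1 + (√(Lam / lam) + 1) * √(∑ j ∈ S, βo j ^ 2) / κ
  refine ⟨fun K _ => hz K, fun η _ hη1 hrow hκbig => ⟨(1 - η) * B, ?_, fun K _ jc => ?_⟩⟩
  · exact (lt_div_iff₀' (by linarith)).1 hκbig
  · exact (abs_sum_mul_le_sum_abs_mul _ _ _ fun l _ => hz K l.1 l.2).trans
      (mul_le_mul_of_nonneg_right (hrow jc) (by positivity))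

/-- **Classical irrepresentable condition implies the GLBI irrepresentable condition in
sparse linear regression.** For the loss `ℓ(β) = ‖y − Xβ‖₂²/(2n)` with
`λI ⪯ X_SᵀX_S ⪯ ΛI` and `λ' = λ(1 − κδΛ/2) > 0`, the oracle iteration satisfies
`‖z'_{K,S}‖_∞ ≤ 1 + (√(Λ/λ) + 1)‖βᵒ_S‖₂/κ` for every `K ≥ 1`; consequently, if
`‖X_{Sᶜ}ᵀX_S(X_SᵀX_S)⁻¹‖_∞ ≤ 1 − η` and `κ` is large enough that
`1 + (√(Λ/λ) + 1)‖βᵒ_S‖₂/κ < (1 − η/2)/(1 − η)`, then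
`sup_{K ≥ 1}‖X_{Sᶜ}ᵀX_S(X_SᵀX_S)⁻¹ z'_{K,S}‖_∞ < 1 − η/2`. -/
theorem linear_classical_irr_implies_glbi_irr
    {n p : ℕ} (X : Fin n → Fin p → ℝ) (y : Fin n → ℝ) (S : Finset (Fin p))
    (ℓ : (Fin p → ℝ) → ℝ)
    (hℓ : ℓ = fun β => (∑ i, (y i - ∑ j, X i j * β j) ^ 2) / (2 * n))
    (βo : Fin p → ℝ) (hβo_supp : ∀ j, j ∉ S → βo j = 0)
    (hβo_min : ∀ β : Fin p → ℝ, (∀ j, j ∉ S → β j = 0) → ℓ βo ≤ ℓ β)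
    (κ δ : ℝ) (hκ : 0 < κ) (hδ : 0 < δ)
    (lam Lam : ℝ) (hlam : 0 < lam) (hLam : 0 < Lam)
    (hlower : ∀ v : Fin p → ℝ, (∀ j, j ∉ S → v j = 0) →
      lam * ∑ j, v j ^ 2 ≤ ∑ i, (∑ j, X i j * v j) ^ 2)
    (hupper : ∀ v : Fin p → ℝ, (∀ j, j ∉ S → v j = 0) →
      ∑ i, (∑ j, X i j * v j) ^ 2 ≤ Lam * ∑ j, v j ^ 2)
    (hlam' : 0 < lam * (1 - κ * δ * Lam / 2))
    (β' z' : ℕ → Fin p → ℝ)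
    (hz'0 : ∀ j, z' 0 j = 0) (hβ'0 : ∀ j, β' 0 j = 0)
    (hsupp : ∀ k j, j ∉ S → z' k j = 0 ∧ β' k j = 0)
    (hz'step : ∀ k, ∀ j ∈ S,
      z' (k + 1) j = z' k j - δ * fderiv ℝ ℓ (β' k) (Pi.single j 1))
    (hβ'step : ∀ k, ∀ j ∈ S, β' (k + 1) j = κ * soft (z' (k + 1) j)) :
    (∀ K : ℕ, 1 ≤ K → ∀ j ∈ S,
        |z' K j| ≤ 1 + (Real.sqrt (Lam / lam) + 1) *
            Real.sqrt (∑ j ∈ S, βo j ^ 2) / κ) ∧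
      ∀ η : ℝ, 0 < η → η < 1 →
        (∀ jc : {j : Fin p // j ∉ S},
          ∑ l : {j : Fin p // j ∈ S},
            |((Matrix.of fun (a : {j : Fin p // j ∉ S}) (b : {j : Fin p // j ∈ S}) =>
                  ∑ i, X i a.1 * X i b.1) *
                (Matrix.of fun (a b : {j : Fin p // j ∈ S}) =>
                  ∑ i, X i a.1 * X i b.1)⁻¹) jc l| ≤ 1 - η) →
        1 + (Real.sqrt (Lam / lam) + 1) * Real.sqrt (∑ j ∈ S, βo j ^ 2) / κ
            < (1 - η / 2) / (1 - η) →
        ∃ b, b < 1 - η / 2 ∧ ∀ K : ℕ, 1 ≤ K → ∀ jc : {j : Fin p // j ∉ S},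
          |∑ l : {j : Fin p // j ∈ S},
              ((Matrix.of fun (a : {j : Fin p // j ∉ S}) (b : {j : Fin p // j ∈ S}) =>
                    ∑ i, X i a.1 * X i b.1) *
                  (Matrix.of fun (a b : {j : Fin p // j ∈ S}) =>
                    ∑ i, X i a.1 * X i b.1)⁻¹) jc l * z' K l.1| ≤ b :=
  linear_classical_irr_implies_glbi_irr_general X y S ℓ hℓ βo hβo_supp hβo_min κ δ hκ hδ lam Lam
    hlam hlower hupper hlam' β' z' hz'0 hβ'0 hsupp hz'step hβ'step
end
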